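/- arXiv:2507.06865 — 6 statements merged into one kernel-verified Lean document; each statement's English description precedes it below -/
import Mathlib

section
/- Let k be a field of characteristic ≠ 2, let g ≥ 1 be an integer, and let (V, ψ) be a (2g+1)-dimensional k-vector space equipped with a nondegenerate symmetric bilinear form ψ. Let B = (b₀, …, b_{2g}) be a basis of V such that ψ(b_i, b_j) = 0 whenever i + j < 2g. Then there exists a unique basis P = (p₀, …, p_{2g}) of V satisfying: (1) p_i = b_i for 0 ≤ i ≤ g; (2) p_{g+i} − b_{g+i} ∈ span(b_{g+i−1}, …, b_{g−i+1}, b_{g−i}) for 1 ≤ i ≤ g; (3) ψ(p_i, p_j) = 0 whenever i + j ≠ 2g. -/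
/-!
Write `N = 2g` and `rev j = N - j`. The Gram matrix of `b` is anti-triangular, so nondegeneracy
forces `ψ (b i) (b (rev i)) ≠ 0`, and triangular elimination shows that `w ↦ (ψ w (b (rev m)))ₘ`
is a bijection from `span (b '' s)` onto `s → k` for every finite `s`. For `h > g` this pins down
`p_h`: the conditions `ψ p_h (b m) = 0` for `rev h < m < h` determine `p_h - b h` up to a multiple
of `b (rev h)`, and `ψ p_h p_h` is affine in that multiple with slope `2 ψ (b h) (b (rev h)) ≠ 0`.
Conversely, a basis `p` as in the theorem is unitriangular with respect to `b`, so on each window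
`rev h < m < h` the `b m` lie in the span of the `p m`; hence `ψ p_h (b m) = 0` there, and `p_h`
is the vector just described.
-/

open Submodule

theorem span_image_le_span_image_of_sub_mem_span_image_Iio {R V ι : Type*} [Ring R]
    [AddCommGroup V] [Module R V] [LinearOrder ι] [WellFoundedLT ι] {b p : ι → V} {T : Set ι}
    (h : ∀ m ∈ T, p m - b m ∈ span R (b '' (T ∩ Set.Iio m))) :
    span R (b '' T) ≤ span R (p '' T) := by
  rw [span_le]
  rintro _ ⟨m, hm, rfl⟩
  induction m using WellFoundedLT.induction with
  | ind m ih =>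
    have hlow : span R (b '' (T ∩ Set.Iio m)) ≤ span R (p '' T) :=
      span_le.2 (by rintro _ ⟨j, ⟨hjT, hjm⟩, rfl⟩; exact ih j hjm hjT)
    simpa using sub_mem (subset_span ⟨m, hm, rfl⟩ : p m ∈ span R (p '' T)) (hlow (h m hm))

theorem linearIndependent_and_span_eq_top_of_sub_mem_span_image_Iio {k V ι : Type*}
    [DivisionRing k] [AddCommGroup V] [Module k V] [Fintype ι] [LinearOrder ι]
    (b : Module.Basis ι k V) {p : ι → V} (h : ∀ j, p j - b j ∈ span k (b '' Set.Iio j)) :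
    LinearIndependent k p ∧ span k (Set.range p) = ⊤ := by
  have hspan : span k (Set.range p) = ⊤ := by
    rw [eq_top_iff, ← b.span_eq, ← Set.image_univ, ← Set.image_univ]
    exact span_image_le_span_image_of_sub_mem_span_image_Iio fun m _ => by simpa using h m
  have : Module.Finite k V := Module.Finite.of_basis b
  exact ⟨linearIndependent_of_top_le_span_of_card_eq_finrank hspan.ge
    (Module.finrank_eq_card_basis b).symm, hspan⟩

theorem Fin.rev_mem_Ioo_rev {n : ℕ} {h m : Fin n} (hm : m ∈ Set.Ioo h.rev h) :
    m.rev ∈ Set.Ioo h.rev h := by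
  simp only [Set.mem_Ioo, Fin.val_rev, Fin.lt_def] at *; omega

namespace LinearMap.BilinForm

variable {k V : Type*} [Field k] [AddCommGroup V] [Module k V] {ψ : LinearMap.BilinForm k V}

theorem apply_eq_zero_of_mem_span_left {S : Set V} {w v : V} (hw : w ∈ span k S)
    (h : ∀ u ∈ S, ψ u v = 0) : ψ w v = 0 :=
  (span_le (p := LinearMap.ker (ψ.flip v))).2 h hw

theorem apply_eq_zero_of_mem_span_right {S : Set V} {v w : V} (hw : w ∈ span k S)
    (h : ∀ u ∈ S, ψ v u = 0) : ψ v w = 0 :=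
  (span_le (p := LinearMap.ker (ψ v))).2 h hw

theorem existsUnique_apply_add_smul_self_eq_zero (hsymm : ∀ v w, ψ v w = ψ w v)
    (h2 : (2 : k) ≠ 0) {q u : V} (hu : ψ u u = 0) (hqu : ψ q u ≠ 0) :
    ∃! c : k, ψ (q + c • u) (q + c • u) = 0 := by
  have expand (c : k) : ψ (q + c • u) (q + c • u) = ψ q q + 2 * ψ q u * c := by
    simp only [map_add, map_smul, LinearMap.add_apply, LinearMap.smul_apply, smul_eq_mul, hu,
      hsymm u q]
    ring
  simp only [expand]
  refine ⟨-ψ q q / (2 * ψ q u), by field_simp; ring, fun c hc => ?_⟩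
  field_simp
  linear_combination hc

theorem apply_rev_ne_zero_of_nondegenerate {N : ℕ} (b : Module.Basis (Fin (N + 1)) k V)
    (hb : ∀ i j : Fin (N + 1), (i : ℕ) + j < N → ψ (b i) (b j) = 0) (hψ : ψ.Nondegenerate)
    (i : Fin (N + 1)) : ψ (b i) (b i.rev) ≠ 0 := by
  have hsign : ((Equiv.Perm.sign (Fin.revPerm : Equiv.Perm (Fin (N + 1))) : ℤ) : k) ≠ 0 := by
    rcases Int.units_eq_one_or (Equiv.Perm.sign (Fin.revPerm : Equiv.Perm (Fin (N + 1))))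
      with h | h <;> simp [h]
  have hdet : ((BilinForm.toMatrix b ψ).submatrix Fin.revPerm _root_.id).det ≠ 0 := by
    rw [Matrix.det_permute]
    exact mul_ne_zero hsign ((BilinForm.nondegenerate_iff_det_ne_zero b).1 hψ)
  -- reversing the rows turns the Gram matrix upper triangular
  have htri : ((BilinForm.toMatrix b ψ).submatrix Fin.revPerm _root_.id).IsUpperTriangular :=
    fun r c (hrc : c < r) => by
      rw [Matrix.submatrix_apply, BilinForm.toMatrix_apply]
      exact hb _ _ <| by
        simp only [Fin.revPerm_apply, Fin.val_rev, _root_.id, Fin.lt_def] at *; omega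
  rw [Matrix.det_of_isUpperTriangular htri] at hdet
  simpa using Finset.prod_ne_zero_iff.1 hdet i.rev (Finset.mem_univ _)

section AntiTriangular

variable {N : ℕ} {b : Fin (N + 1) → V}
  (hb : ∀ i j : Fin (N + 1), (i : ℕ) + j < N → ψ (b i) (b j) = 0)
  (hdiag : ∀ i, ψ (b i) (b i.rev) ≠ 0)
include hb hdiag

theorem eq_zero_of_mem_span_of_apply_rev_eq_zero (s : Finset (Fin (N + 1))) {w : V}
    (hw : w ∈ span k (b '' s)) (h : ∀ m ∈ s, ψ w (b m.rev) = 0) : w = 0 := by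
  classical
  induction s using Finset.induction_on_max generalizing w with
  | empty => simpa using hw
  | insert a s hlt ih =>
    rw [Finset.coe_insert, Set.image_insert_eq, mem_span_insert] at hw
    obtain ⟨c, z, hz, rfl⟩ := hw
    have hza : ψ z (b a.rev) = 0 := apply_eq_zero_of_mem_span_left hz <| by
      rintro _ ⟨j, hj, rfl⟩
      have := hlt j hj
      exact hb _ _ (by simp only [Fin.val_rev, Fin.lt_def] at *; omega)
    have hc : c = 0 := by
      have := h a (Finset.mem_insert_self a s)
      simp only [map_add, map_smul, LinearMap.add_apply, LinearMap.smul_apply, smul_eq_mul,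
        hza, add_zero] at this
      exact (mul_eq_zero.1 this).resolve_right (hdiag a)
    subst hc
    rw [zero_smul, zero_add] at h ⊢
    exact ih hz fun m hm => h m (Finset.mem_insert_of_mem hm)

theorem exists_mem_span_apply_add_rev_eq_zero (s : Finset (Fin (N + 1))) (x : V) :
    ∃ w ∈ span k (b '' s), ∀ m ∈ s, ψ (x + w) (b m.rev) = 0 := by
  classical
  induction s using Finset.induction_on_min with
  | empty => exact ⟨0, zero_mem _, by simp⟩
  | insert a s hlt ih =>
    obtain ⟨w, hw, hxw⟩ := ih
    set c := -ψ (x + w) (b a.rev) / ψ (b a) (b a.rev)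
    refine ⟨w + c • b a, ?_, ?_⟩
    · rw [Finset.coe_insert, Set.image_insert_eq]
      exact add_mem (span_mono (Set.subset_insert _ _) hw)
        (smul_mem _ _ (subset_span (Set.mem_insert _ _)))
    · have split (m : Fin (N + 1)) : ψ (x + (w + c • b a)) (b m.rev) =
          ψ (x + w) (b m.rev) + c * ψ (b a) (b m.rev) := by
        rw [← add_assoc, map_add, map_smul]; rfl
      simp only [Finset.mem_insert, forall_eq_or_imp, split]
      refine ⟨by rw [div_mul_cancel₀ _ (hdiag a), add_neg_cancel], fun m hm => ?_⟩
      have := hlt m hm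
      rw [hxw m hm, hb a m.rev (by simp only [Fin.val_rev, Fin.lt_def] at *; omega), mul_zero,
        add_zero]

end AntiTriangular

section Straightening

variable {N : ℕ}

/-- In the paper's notation `h = g + i` and `h.rev = g - i`. -/
def IsStraightenedAt (ψ : LinearMap.BilinForm k V) (b : Fin (N + 1) → V) (h : Fin (N + 1))
    (v : V) : Prop :=
  v - b h ∈ span k (b '' Set.Ico h.rev h) ∧ (∀ m ∈ Set.Ioo h.rev h, ψ v (b m) = 0) ∧ ψ v v = 0

/-- For `j ≤ j.rev` the interval `Set.Ico j.rev j` is empty, so the first condition forces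
`p j = b j`. -/
def IsStraightening (ψ : LinearMap.BilinForm k V) (b p : Fin (N + 1) → V) : Prop :=
  (∀ j, p j - b j ∈ span k (b '' Set.Ico j.rev j)) ∧ ∀ i j, j ≠ i.rev → ψ (p i) (p j) = 0

theorem IsStraightening.linearIndependent_and_span_eq_top (b : Module.Basis (Fin (N + 1)) k V)
    {p : Fin (N + 1) → V} (hp : IsStraightening ψ b p) :
    LinearIndependent k p ∧ span k (Set.range p) = ⊤ :=
  linearIndependent_and_span_eq_top_of_sub_mem_span_image_Iio b fun j =>
    span_mono (Set.image_mono Set.Ico_subset_Iio_self) (hp.1 j)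

variable {b : Fin (N + 1) → V} {h : Fin (N + 1)} {v : V}

theorem IsStraightening.isStraightenedAt {p : Fin (N + 1) → V} (hp : IsStraightening ψ b p)
    (hh : h.rev < h) : IsStraightenedAt ψ b h (p h) := by
  refine ⟨hp.1 h, fun m hm => ?_, hp.2 h h hh.ne'⟩
  have hle : span k (b '' Set.Ioo h.rev h) ≤ span k (p '' Set.Ioo h.rev h) :=
    span_image_le_span_image_of_sub_mem_span_image_Iio fun j hj => by
      refine span_mono (Set.image_mono fun x hx => ?_) (hp.1 j)
      exact ⟨⟨(Fin.rev_lt_rev.2 hj.2).trans_le hx.1, hx.2.trans hj.2⟩, hx.2⟩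
  refine apply_eq_zero_of_mem_span_right (hle (subset_span ⟨m, hm, rfl⟩)) ?_
  rintro _ ⟨j, hj, rfl⟩
  exact hp.2 h j hj.1.ne'

variable (hb : ∀ i j : Fin (N + 1), (i : ℕ) + j < N → ψ (b i) (b j) = 0)
include hb

theorem apply_eq_zero_of_mem_span_Ico_rev {w : V} (hw : w ∈ span k (b '' Set.Ico h.rev h))
    {m : Fin (N + 1)} (hm : m ≤ h.rev) : ψ w (b m) = 0 :=
  apply_eq_zero_of_mem_span_left hw <| by
    rintro _ ⟨j, ⟨-, hj⟩, rfl⟩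
    exact hb _ _ (by simp only [Fin.val_rev, Fin.lt_def, Fin.le_def] at *; omega)

theorem IsStraightenedAt.apply_rev (hv : IsStraightenedAt ψ b h v) :
    ψ v (b h.rev) = ψ (b h) (b h.rev) := by
  rw [← add_sub_cancel (b h) v, map_add, LinearMap.add_apply,
    apply_eq_zero_of_mem_span_Ico_rev hb hv.1 le_rfl, add_zero]

theorem IsStraightenedAt.apply_eq_zero (hv : IsStraightenedAt ψ b h v) {m : Fin (N + 1)}
    (hmh : m < h) (hm : m ≠ h.rev) : ψ v (b m) = 0 := by
  rcases hm.lt_or_gt with hm | hm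
  · rw [← add_sub_cancel (b h) v, map_add, LinearMap.add_apply,
      apply_eq_zero_of_mem_span_Ico_rev hb hv.1 hm.le, add_zero]
    exact hb _ _ (by simp only [Fin.val_rev, Fin.lt_def] at *; omega)
  · exact hv.2.1 m ⟨hm, hmh⟩

theorem IsStraightenedAt.apply_eq_zero_of_sub_mem (hv : IsStraightenedAt ψ b h v)
    {i : Fin (N + 1)} {u : V} (hu : u - b i ∈ span k (b '' Set.Ico i.rev i)) (hih : i < h)
    (hi : i ≠ h.rev) : ψ v u = 0 := by
  rw [← add_sub_cancel (b i) u, map_add, hv.apply_eq_zero hb hih hi, zero_add]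
  refine apply_eq_zero_of_mem_span_right hu ?_
  rintro _ ⟨m, ⟨hm₁, hm₂⟩, rfl⟩
  refine hv.apply_eq_zero hb (hm₂.trans hih) fun hmh => ?_
  subst hmh
  simp only [Fin.val_rev, Fin.lt_def, Fin.le_def] at *; omega

variable (hdiag : ∀ i, ψ (b i) (b i.rev) ≠ 0) (hsymm : ∀ v w, ψ v w = ψ w v) (h2 : (2 : k) ≠ 0)
include hdiag hsymm h2

theorem exists_isStraightenedAt (hh : h.rev < h) : ∃ v, IsStraightenedAt ψ b h v := by
  obtain ⟨w, hw, hkill⟩ :=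
    exists_mem_span_apply_add_rev_eq_zero hb hdiag (Finset.Ioo h.rev h) (b h)
  rw [Finset.coe_Ioo] at hw
  have hq (m) (hm : m ∈ Set.Ioo h.rev h) : ψ (b h + w) (b m) = 0 := by
    simpa using hkill m.rev (by simpa using Fin.rev_mem_Ioo_rev hm)
  have hqrev : ψ (b h + w) (b h.rev) = ψ (b h) (b h.rev) := by
    rw [map_add, LinearMap.add_apply, apply_eq_zero_of_mem_span_Ico_rev hb
      (span_mono (Set.image_mono Set.Ioo_subset_Ico_self) hw) le_rfl, add_zero]
  have hu : ψ (b h.rev) (b h.rev) = 0 :=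
    hb _ _ (by simp only [Fin.val_rev, Fin.lt_def] at *; omega)
  obtain ⟨c, hc, -⟩ :=
    existsUnique_apply_add_smul_self_eq_zero hsymm h2 hu (hqrev ▸ hdiag h)
  refine ⟨b h + w + c • b h.rev, ?_, fun m hm => ?_, hc⟩
  · rw [← Set.Ioo_insert_left hh, Set.image_insert_eq, add_assoc, add_sub_cancel_left]
    exact add_mem (span_mono (Set.subset_insert _ _) hw)
      (smul_mem _ _ (subset_span (Set.mem_insert _ _)))
  · rw [map_add, LinearMap.add_apply, hq m hm, map_smul, LinearMap.smul_apply,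
      hb _ _ (by simp only [Set.mem_Ioo, Fin.val_rev, Fin.lt_def] at *; omega), smul_zero,
      add_zero]

theorem IsStraightenedAt.unique (hh : h.rev < h) {v₁ v₂ : V} (hv₁ : IsStraightenedAt ψ b h v₁)
    (hv₂ : IsStraightenedAt ψ b h v₂) : v₁ = v₂ := by
  have hsub : v₁ - v₂ ∈ span k (b '' insert h.rev (Set.Ioo h.rev h)) := by
    rw [Set.Ioo_insert_left hh, ← sub_sub_sub_cancel_right v₁ v₂ (b h)]
    exact sub_mem hv₁.1 hv₂.1
  rw [Set.image_insert_eq, mem_span_insert] at hsub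
  obtain ⟨c, z, hz, hvz⟩ := hsub
  have hz0 : z = 0 := by
    refine eq_zero_of_mem_span_of_apply_rev_eq_zero hb hdiag (Finset.Ioo h.rev h)
      (by rwa [Finset.coe_Ioo]) fun m hm => ?_
    have hm' := Fin.rev_mem_Ioo_rev (by simpa using hm)
    rw [eq_sub_of_add_eq' hvz.symm, map_sub, map_sub, map_smul]
    simp only [LinearMap.sub_apply, LinearMap.smul_apply, hv₁.2.1 _ hm', hv₂.2.1 _ hm',
      hb h.rev m.rev (by simp only [Set.mem_Ioo, Fin.val_rev, Fin.lt_def] at *; omega),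
      smul_zero, sub_zero]
  rw [hz0, add_zero, sub_eq_iff_eq_add'] at hvz
  have hc : c = 0 :=
    (existsUnique_apply_add_smul_self_eq_zero hsymm h2
      (hb _ _ (by simp only [Fin.val_rev, Fin.lt_def] at *; omega))
      ((hv₂.apply_rev hb).symm ▸ hdiag h)).unique (hvz ▸ hv₁.2.2) (by simpa using hv₂.2.2)
  rw [hvz, hc, zero_smul, add_zero]

theorem exists_isStraightening : ∃ p, IsStraightening ψ b p := by
  choose! P hP using fun (h : Fin (N + 1)) (hh : h.rev < h) =>
    exists_isStraightenedAt hb hdiag hsymm h2 hh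
  set p := fun j => if j.rev < j then P j else b j
  have hpP (j) (hj : j.rev < j) : IsStraightenedAt ψ b j (p j) := by simpa [p, hj] using hP j hj
  have hpb (j) (hj : ¬ j.rev < j) : p j = b j := by simp [p, hj]
  have hsub (j) : p j - b j ∈ span k (b '' Set.Ico j.rev j) := by
    by_cases hj : j.rev < j
    · exact (hpP j hj).1
    · simp [hpb j hj]
  have horth (i j) (hij : i ≤ j) (hne : i ≠ j.rev) : ψ (p j) (p i) = 0 := by
    by_cases hj : j.rev < j
    · rcases hij.lt_or_eq with hlt | rfl
      · exact (hpP j hj).apply_eq_zero_of_sub_mem hb (hsub i) hlt hne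
      · exact (hpP i hj).2.2
    · have hi : ¬ i.rev < i := by
        simp only [not_lt, Fin.val_rev, Fin.lt_def, Fin.le_def] at *; omega
      rw [hpb i hi, hpb j hj]
      refine hb _ _ ?_
      simp only [not_lt, ne_eq, Fin.ext_iff, Fin.val_rev, Fin.lt_def, Fin.le_def] at *; omega
  refine ⟨p, hsub, fun i j hij => ?_⟩
  rcases le_total i j with hle | hle
  · rw [hsymm]
    exact horth i j hle (by simp only [ne_eq, Fin.ext_iff, Fin.val_rev] at *; omega)
  · exact horth j i hle hij

theorem existsUnique_isStraightening : ∃! p, IsStraightening ψ b p := by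
  obtain ⟨p, hp⟩ := exists_isStraightening hb hdiag hsymm h2
  refine ⟨p, hp, fun q hq => funext fun j => ?_⟩
  by_cases hj : j.rev < j
  · exact (hq.isStraightenedAt hj).unique hb hdiag hsymm h2 hj (hp.isStraightenedAt hj)
  · have hIco : Set.Ico j.rev j = ∅ := Set.Ico_eq_empty hj
    have hq' := hq.1 j
    have hp' := hp.1 j
    simp only [hIco, Set.image_empty, span_empty, mem_bot, sub_eq_zero] at hq' hp'
    rw [hq', hp']

end Straightening

end LinearMap.BilinForm

theorem sub_mem_span_image_Ico_rev_iff {k V : Type*} [Field k] [AddCommGroup V] [Module k V]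
    {g : ℕ} (b p : Fin (2 * g + 1) → V) :
    (∀ j, p j - b j ∈ span k (b '' Set.Ico j.rev j)) ↔
      (∀ i : Fin (2 * g + 1), (i : ℕ) ≤ g → p i = b i) ∧
      (∀ (i : ℕ) (hi : g + i < 2 * g + 1), 1 ≤ i →
        p ⟨g + i, hi⟩ - b ⟨g + i, hi⟩ ∈
          span k (b '' {j : Fin (2 * g + 1) | g - i ≤ (j : ℕ) ∧ (j : ℕ) < g + i})) := by
  have hIco (i : ℕ) (hi : g + i < 2 * g + 1) : Set.Ico (Fin.rev ⟨g + i, hi⟩) ⟨g + i, hi⟩ =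
      {j : Fin (2 * g + 1) | g - i ≤ (j : ℕ) ∧ (j : ℕ) < g + i} := by
    ext j
    simp only [Set.mem_Ico, Set.mem_ofPred_eq, Fin.le_def, Fin.lt_def, Fin.val_rev]
    omega
  constructor
  · intro h
    refine ⟨fun i hi => ?_, fun i hi _ => hIco i hi ▸ h _⟩
    have hi' : ¬ i.rev < i := by simp only [not_lt, Fin.le_def, Fin.val_rev]; omega
    simpa [Set.Ico_eq_empty hi', sub_eq_zero] using h i
  · rintro ⟨h₁, h₂⟩ j
    by_cases hj : (j : ℕ) ≤ g
    · simp [h₁ j hj]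
    · obtain ⟨i, hi⟩ : ∃ i : ℕ, (j : ℕ) = g + i := ⟨j - g, by omega⟩
      have hgi : g + i < 2 * g + 1 := by omega
      obtain rfl : j = ⟨g + i, hgi⟩ := Fin.ext hi
      rw [hIco i hgi]
      exact h₂ i hgi (by omega)

/-- **Straightening lemma.** Let `k` be a field of characteristic `≠ 2`, `g ≥ 1`, and `(V, ψ)`
a `(2g+1)`-dimensional `k`-vector space with a nondegenerate symmetric bilinear form `ψ`.
Let `b₀, …, b_{2g}` be a basis of `V` with `ψ(b_i, b_j) = 0` whenever `i + j < 2g`.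
Then there is a unique basis `p₀, …, p_{2g}` of `V` such that:
(1) `p_i = b_i` for `0 ≤ i ≤ g`;
(2) `p_{g+i} − b_{g+i} ∈ span(b_{g+i−1}, …, b_{g−i})` for `1 ≤ i ≤ g`;
(3) `ψ(p_i, p_j) = 0` whenever `i + j ≠ 2g`. -/
theorem stmt_0
    (k : Type*) [Field k] (h2 : (2 : k) ≠ 0)
    (g : ℕ)
    (V : Type*) [AddCommGroup V] [Module k V]
    (ψ : LinearMap.BilinForm k V)
    (hsymm : ∀ v w : V, ψ v w = ψ w v)
    (hnd : ψ.Nondegenerate)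
    (b : Module.Basis (Fin (2 * g + 1)) k V)
    (hb : ∀ i j : Fin (2 * g + 1), (i : ℕ) + (j : ℕ) < 2 * g → ψ (b i) (b j) = 0) :
    ∃! p : Fin (2 * g + 1) → V,
      (LinearIndependent k p ∧ Submodule.span k (Set.range p) = ⊤) ∧
      (∀ i : Fin (2 * g + 1), (i : ℕ) ≤ g → p i = b i) ∧
      (∀ i : ℕ, ∀ _hi1 : 1 ≤ i, ∀ _hi2 : i ≤ g,
        p ⟨g + i, by omega⟩ - b ⟨g + i, by omega⟩ ∈
          Submodule.span k (⇑b '' {j : Fin (2 * g + 1) | g - i ≤ (j : ℕ) ∧ (j : ℕ) < g + i})) ∧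
      (∀ i j : Fin (2 * g + 1), (i : ℕ) + (j : ℕ) ≠ 2 * g → ψ (p i) (p j) = 0) := by
  have hdiag := LinearMap.BilinForm.apply_rev_ne_zero_of_nondegenerate b hb hnd
  have hne (i j : Fin (2 * g + 1)) : j ≠ i.rev ↔ (i : ℕ) + j ≠ 2 * g := by
    simp only [ne_eq, Fin.ext_iff, Fin.val_rev]; omega
  refine (existsUnique_congr fun p => ?_).2
    (LinearMap.BilinForm.existsUnique_isStraightening hb hdiag hsymm h2)
  constructor
  · rintro ⟨-, hfix, hspan, horth⟩
    exact ⟨(sub_mem_span_image_Ico_rev_iff b p).2 ⟨hfix, fun i _ hi => hspan i hi (by omega)⟩,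
      fun i j hij => horth i j ((hne i j).1 hij)⟩
  · intro hp
    obtain ⟨hfix, hspan⟩ := (sub_mem_span_image_Ico_rev_iff b p).1 hp.1
    exact ⟨hp.linearIndependent_and_span_eq_top b, hfix, fun i hi _ => hspan i (by omega) hi,
      fun i j hij => hp.2 i j ((hne i j).2 hij)⟩
end

section
/- Let R be a commutative ring in which 2 is invertible, g ≥ 1 an integer, and f(x) = x^{2g+1} + c₁x^{2g} + ⋯ + c_{2g+1} ∈ R[x] a monic polynomial. Let V = R[x]/(f(x)), let τ : V → R be the R-linear map sending a₀ + a₁x + ⋯ + a_{2g}x^{2g} to a_{2g}, and set ψ(a, b) = τ(ab). Define p_i = x^i for 0 ≤ i ≤ g, and p_{g+i} = x^{g+i} + c₁x^{g+i−1} + c₂x^{g+i−2} + ⋯ + c_{2i−1}x^{g−i+1} + (1/2)c_{2i}x^{g−i} for 1 ≤ i ≤ g. Then (p₀, …, p_{2g}) is an R-basis of V, and ψ(p_i, p_j) = 1 if i + j = 2g and ψ(p_i, p_j) = 0 otherwise. -/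
/-!
Write `s k = τ (xᵏ)`. Then `s` vanishes below `2g`, `s (2g) = 1`, and `s` satisfies the linear
recurrence with characteristic polynomial `f`. Multiplying the truncation
`x^b + c₁x^{b-1} + ⋯ + c_b` of `f` by `x^{2g+1-b}` gives `f` minus terms of degree `≤ 2g - b`,
so `τ (x^m (x^b + ⋯ + c_b)) = δ_{m+b,2g}` for `m ≤ 2g`. Since
`p_j = x^{2g-j} (x^{2(j-g)} + ⋯ + c_{2(j-g)}) - ½ c_{2(j-g)} x^{2g-j}` for `j > g`, this gives
`τ (x^m p_j) = δ_{m+j,2g} - ½ c_{2(j-g)} δ_{m,j}` for `m ≤ j`. For `i ≤ j` the element `p_i` only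
involves powers `x^m` with `m ≤ i`, and expanding it, the two halves `½ c_{2(j-g)}` cancel
when `i = j`. The pairing matrix is then antidiagonal with ones, so `p` is linearly independent;
it spans because `x^j` is `p_j` plus a combination of lower powers.
-/

open Finset

section PFamily

variable {R M : Type*} [CommRing R] [Invertible (2 : R)] [AddCommGroup M] [Module R M]

/-- `pFamily g c u j` is `p_j` with every `xᵏ` replaced by `u k`; `p = pFamily g c (x ^ ·)`. -/
def pFamily (g : ℕ) (c : ℕ → R) (u : ℕ → M) (j : ℕ) : M :=
  if j ≤ g then u j
  else u j + ∑ t ∈ Icc 1 (2 * (j - g) - 1), c t • u (j - t) +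
    (⅟(2 : R) * c (2 * (j - g))) • u (2 * g - j)

variable {g : ℕ} {c : ℕ → R}

theorem map_pFamily {N : Type*} [AddCommGroup N] [Module R N] (L : M →ₗ[R] N) (u : ℕ → M)
    (j : ℕ) : L (pFamily g c u j) = pFamily g c (L ∘ u) j := by
  unfold pFamily
  split_ifs <;> simp only [map_add, map_sum, map_smul, Function.comp_apply]

theorem pFamily_congr {u v : ℕ → M} {j : ℕ} (hj : j ≤ 2 * g) (h : ∀ k ≤ j, u k = v k) :
    pFamily g c u j = pFamily g c v j := by
  unfold pFamily
  split_ifs with hjg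
  · exact h j le_rfl
  · rw [h j le_rfl, h (2 * g - j) (by omega)]
    congr 2
    exact sum_congr rfl fun t _ => by rw [h (j - t) (by omega)]

theorem mem_span_range_pFamily (u : ℕ → M) {k : ℕ} (hk : k ≤ 2 * g) :
    u k ∈ Submodule.span R (Set.range fun j : Fin (2 * g + 1) => pFamily g c u j) := by
  induction k using Nat.strong_induction_on with
  | _ k ih =>
    have hmem : pFamily g c u k ∈
        Submodule.span R (Set.range fun j : Fin (2 * g + 1) => pFamily g c u j) :=
      Submodule.subset_span ⟨⟨k, by omega⟩, rfl⟩
    by_cases hkg : k ≤ g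
    · simpa [pFamily, hkg] using hmem
    have hu : u k = pFamily g c u k - ∑ t ∈ Icc 1 (2 * (k - g) - 1), c t • u (k - t) -
        (⅟(2 : R) * c (2 * (k - g))) • u (2 * g - k) := by
      simp only [pFamily, if_neg hkg]
      abel
    rw [hu]
    refine Submodule.sub_mem _ (Submodule.sub_mem _ hmem (Submodule.sum_mem _ fun t ht => ?_))
      (Submodule.smul_mem _ _ (ih _ (by omega) (by omega)))
    rw [mem_Icc] at ht
    exact Submodule.smul_mem _ _ (ih _ (by omega) (by omega))

end PFamily

/-- The impulse response of the linear recurrence with characteristic polynomial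
`X ^ (n + 1) + ∑ c t X ^ (n + 1 - t)`. -/
structure IsFundamentalSolution {R : Type*} [CommRing R] (n : ℕ) (c : ℕ → R) (s : ℕ → R) :
    Prop where
  eq_ite_of_le : ∀ k ≤ n, s k = if k = n then 1 else 0
  add_sum_eq_zero : ∀ N, n < N → s N + ∑ t ∈ Icc 1 (n + 1), c t * s (N - t) = 0

namespace IsFundamentalSolution

variable {R : Type*} [CommRing R] {n : ℕ} {c : ℕ → R} {s : ℕ → R}

theorem eq_zero_of_lt (hs : IsFundamentalSolution n c s) {k : ℕ} (hk : k < n) : s k = 0 := by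
  rw [hs.eq_ite_of_le k hk.le, if_neg hk.ne]

theorem add_sum_Icc_mul (hs : IsFundamentalSolution n c s) {m b : ℕ} (hm : m ≤ n)
    (hb : b ≤ n + 1) :
    s (m + b) + ∑ t ∈ Icc 1 b, c t * s (m + b - t) = if m + b = n then 1 else 0 := by
  by_cases hmb : m + b ≤ n
  · rw [sum_eq_zero fun t ht => ?_, add_zero, hs.eq_ite_of_le _ hmb]
    rw [mem_Icc] at ht
    rw [hs.eq_zero_of_lt (by omega), mul_zero]
  · rw [if_neg (by omega), ← hs.add_sum_eq_zero (m + b) (by omega)]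
    congr 1
    refine sum_subset (Icc_subset_Icc_right hb) fun t ht htb => ?_
    simp only [mem_Icc, not_and, not_le] at ht htb
    rw [hs.eq_zero_of_lt (by omega), mul_zero]

variable [Invertible (2 : R)] {g : ℕ}

theorem pFamily_add (hs : IsFundamentalSolution (2 * g) c s) {j m : ℕ} (hj : j ≤ 2 * g)
    (hm : m ≤ j) :
    pFamily g c (fun l => s (l + m)) j =
      if m + j = 2 * g then 1 else if g < j ∧ m = j then -(⅟2 * c (2 * (j - g))) else 0 := by
  by_cases hjg : j ≤ g
  · have : ¬(g < j ∧ m = j) := by omega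
    simp only [pFamily, if_pos hjg, if_neg this, Nat.add_comm j m]
    exact hs.eq_ite_of_le _ (by omega)
  have hb : 2 * (j - g) = (2 * (j - g) - 1) + 1 := by omega
  have key := hs.add_sum_Icc_mul (m := m + 2 * g - j) (b := 2 * (j - g)) (by omega) (by omega)
  rw [show m + 2 * g - j + 2 * (j - g) = m + j by omega, hb, sum_Icc_succ_top (by omega), ← hb,
    show m + j - 2 * (j - g) = m + 2 * g - j by omega] at key
  have hlow : s (m + 2 * g - j) = if m = j then 1 else 0 := by
    rw [hs.eq_ite_of_le _ (by omega)]
    simp only [show m + 2 * g - j = 2 * g ↔ m = j by omega]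
  simp only [pFamily, if_neg hjg, smul_eq_mul]
  rw [sum_congr rfl fun t ht => by rw [show j - t + m = m + j - t by rw [mem_Icc] at ht; omega],
    show 2 * g - j + m = m + 2 * g - j by omega, Nat.add_comm j m]
  have h2 : (2 : R) * ⅟2 = 1 := mul_invOf_self 2
  rw [hlow] at key ⊢
  split_ifs at key ⊢ <;>
    first | omega | linear_combination key | linear_combination key + c (2 * (j - g)) * h2

theorem pFamily_pFamily (hs : IsFundamentalSolution (2 * g) c s) {i j : ℕ} (hij : i ≤ j)
    (hj : j ≤ 2 * g) :
    pFamily g c (fun k => pFamily g c (fun l => s (l + k)) j) i =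
      if i + j = 2 * g then 1 else 0 := by
  rw [pFamily_congr (by omega) fun k hk => hs.pFamily_add hj (hk.trans hij)]
  by_cases hig : i ≤ g
  · simp only [pFamily, if_pos hig]
    split_ifs <;> first | rfl | omega
  simp only [pFamily, if_neg hig, smul_eq_mul]
  rw [sum_eq_zero fun t ht => ?_]
  · have hi2g : 2 * g - i ≠ j := by omega
    by_cases hij' : i = j
    · subst hij'
      simp only [show 2 * g - i + i = 2 * g by omega, show i + i ≠ 2 * g by omega, hi2g,
        if_true, if_false, and_true, if_pos (not_le.mp hig)]
      ring
    · simp only [show 2 * g - i + j ≠ 2 * g by omega, show i + j ≠ 2 * g by omega, hij', hi2g,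
        if_false, and_false]
      ring
  · rw [mem_Icc] at ht
    rw [if_neg (by omega), if_neg (by omega), mul_zero]

end IsFundamentalSolution

section Polynomial

open Polynomial

variable {R : Type*} [CommRing R]

theorem Polynomial.degree_sum_C_mul_X_pow_sub_lt (n : ℕ) (c : ℕ → R) :
    (∑ t ∈ Icc 1 n, C (c t) * X ^ (n - t)).degree < (n : WithBot ℕ) := by
  refine (degree_sum_le _ _).trans_lt ((Finset.sup_lt_iff (WithBot.bot_lt_coe n)).2 fun t ht => ?_)
  rw [mem_Icc] at ht
  exact (degree_C_mul_X_pow_le _ _).trans_lt (Nat.cast_lt.2 (by omega))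

theorem Polynomial.monic_X_pow_add_sum (n : ℕ) (c : ℕ → R) :
    (X ^ n + ∑ t ∈ Icc 1 n, C (c t) * X ^ (n - t)).Monic :=
  monic_X_pow_add (degree_sum_C_mul_X_pow_sub_lt n c)

theorem Polynomial.natDegree_X_pow_add_sum_le (n : ℕ) (c : ℕ → R) :
    (X ^ n + ∑ t ∈ Icc 1 n, C (c t) * X ^ (n - t)).natDegree ≤ n :=
  natDegree_add_le_of_degree_le (natDegree_X_pow_le n)
    (natDegree_le_iff_degree_le.2 (degree_sum_C_mul_X_pow_sub_lt n c).le)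

theorem Polynomial.aeval_X_pow_add_sum {A : Type*} [CommRing A] [Algebra R A] (x : A) (n : ℕ)
    (c : ℕ → R) :
    aeval x (X ^ n + ∑ t ∈ Icc 1 n, C (c t) * X ^ (n - t)) =
      x ^ n + ∑ t ∈ Icc 1 n, c t • x ^ (n - t) := by
  simp [Algebra.smul_def]

end Polynomial

section Algebra

variable {R A : Type*} [CommRing R] [CommRing A] [Algebra R A]

theorem isFundamentalSolution_map_pow (τ : A →ₗ[R] R) (x : A) {n : ℕ} {c : ℕ → R}
    (hτ : ∀ a : Fin (n + 1) → R, τ (∑ i, a i • x ^ (i : ℕ)) = a (Fin.last n))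
    (hx : x ^ (n + 1) + ∑ t ∈ Icc 1 (n + 1), c t • x ^ (n + 1 - t) = 0) :
    IsFundamentalSolution n c fun k => τ (x ^ k) where
  eq_ite_of_le k hk := by
    have h := hτ (Pi.single ⟨k, by omega⟩ 1)
    rw [Fintype.sum_eq_single ⟨k, by omega⟩ fun i hi => by rw [Pi.single_eq_of_ne hi, zero_smul],
      Pi.single_eq_same, one_smul] at h
    simpa [Pi.single_apply, Fin.ext_iff, eq_comm] using h
  add_sum_eq_zero N hN := by
    have h := congr_arg (fun y => τ (x ^ (N - (n + 1)) * y)) hx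
    simp only [mul_add, mul_zero, map_zero, Finset.mul_sum, mul_smul_comm, ← pow_add, map_add,
      map_sum, map_smul, smul_eq_mul, Nat.sub_add_cancel hN] at h
    rw [← h]
    congr 1
    refine sum_congr rfl fun t ht => ?_
    rw [mem_Icc] at ht
    rw [show N - (n + 1) + (n + 1 - t) = N - t by omega]

theorem map_pFamily_mul_pFamily [Invertible (2 : R)] (τ : A →ₗ[R] R) (x : A) {g : ℕ}
    {c : ℕ → R} (hs : IsFundamentalSolution (2 * g) c fun k => τ (x ^ k)) {i j : ℕ}
    (hi : i ≤ 2 * g) (hj : j ≤ 2 * g) :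
    τ (pFamily g c (x ^ ·) i * pFamily g c (x ^ ·) j) = if i + j = 2 * g then 1 else 0 := by
  wlog hij : i ≤ j generalizing i j
  · rw [mul_comm, add_comm]
    exact this hj hi (by omega)
  have hmul (y : A) (k : ℕ) :
      τ (pFamily g c (x ^ ·) k * y) = pFamily g c (fun l => τ (x ^ l * y)) k :=
    map_pFamily (τ ∘ₗ LinearMap.mulRight R y) _ k
  simp_rw [hmul, mul_comm _ (pFamily g c (x ^ ·) j), hmul, ← pow_add]
  exact hs.pFamily_pFamily hij hj

theorem linearIndependent_of_map_mul_eq_ite (τ : A →ₗ[R] R) {n : ℕ} {p : Fin (n + 1) → A}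
    (h : ∀ i j, τ (p i * p j) = if (i : ℕ) + j = n then 1 else 0) : LinearIndependent R p := by
  refine Fintype.linearIndependent_iff.2 fun l hl j => ?_
  have hj := congr_arg (τ ∘ₗ LinearMap.mulRight R (p j.rev)) hl
  simpa [h, show ∀ i : Fin (n + 1), ((i : ℕ) + (n - j) = n ↔ i = j) from
    fun i => by rw [Fin.ext_iff]; omega] using hj

end Algebra

theorem AdjoinRoot.span_range_pFamily_root_pow {R : Type*} [CommRing R] [Invertible (2 : R)]
    {f : Polynomial R} (hf : f.Monic) {g : ℕ} (hdeg : f.natDegree ≤ 2 * g + 1) (c : ℕ → R) :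
    Submodule.span R (Set.range fun j : Fin (2 * g + 1) => pFamily g c (root f ^ ·) j) = ⊤ := by
  rw [eq_top_iff, ← (powerBasis' hf).basis.span_eq, Submodule.span_le]
  rintro _ ⟨k, rfl⟩
  rw [PowerBasis.coe_basis, powerBasis'_gen]
  exact mem_span_range_pFamily _ (by have := k.isLt; simp only [powerBasis'_dim] at this; omega)

/-- Let `R` be a commutative ring in which `2` is invertible, `g ≥ 1`, and
`f(x) = x^{2g+1} + c₁x^{2g} + ⋯ + c_{2g+1} ∈ R[x]` monic.  Let `V = R[x]/(f)`,
`τ : V → R` the coefficient of `x^{2g}`, and `ψ(a,b) = τ(ab)`.  Define `p_i = x^i` for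
`0 ≤ i ≤ g` and `p_{g+i} = x^{g+i} + c₁x^{g+i−1} + ⋯ + c_{2i−1}x^{g−i+1} + (1/2)c_{2i}x^{g−i}`
for `1 ≤ i ≤ g`.  Then `(p₀, …, p_{2g})` is an `R`-basis of `V` and
`ψ(p_i, p_j) = 1` if `i + j = 2g`, `ψ(p_i, p_j) = 0` otherwise. -/
theorem stmt_1
    (R : Type*) [CommRing R] [Invertible (2 : R)]
    (g : ℕ)
    (c : ℕ → R)
    (f : Polynomial R)
    (hf : f = Polynomial.X ^ (2 * g + 1) +
      ∑ t ∈ Finset.Icc 1 (2 * g + 1), Polynomial.C (c t) * Polynomial.X ^ (2 * g + 1 - t))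
    -- `τ` picks out the coefficient of `x^{2g}`:
    (τ : AdjoinRoot f →ₗ[R] R)
    (hτ : ∀ a : Fin (2 * g + 1) → R,
      τ (∑ i : Fin (2 * g + 1), a i • AdjoinRoot.root f ^ (i : ℕ)) = a ⟨2 * g, by omega⟩)
    -- the family `p`:
    (p : Fin (2 * g + 1) → AdjoinRoot f)
    (hp1 : ∀ i : Fin (2 * g + 1), (i : ℕ) ≤ g → p i = AdjoinRoot.root f ^ (i : ℕ))
    (hp2 : ∀ i : Fin (2 * g + 1), g < (i : ℕ) →
      p i = AdjoinRoot.root f ^ (i : ℕ)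
        + ∑ t ∈ Finset.Icc 1 (2 * ((i : ℕ) - g) - 1), c t • AdjoinRoot.root f ^ ((i : ℕ) - t)
        + (⅟(2 : R) * c (2 * ((i : ℕ) - g))) • AdjoinRoot.root f ^ (2 * g - (i : ℕ))) :
    (LinearIndependent R p ∧ Submodule.span R (Set.range p) = ⊤) ∧
    ∀ i j : Fin (2 * g + 1),
      τ (p i * p j) = if (i : ℕ) + (j : ℕ) = 2 * g then 1 else 0 := by
  have hx : AdjoinRoot.root f ^ (2 * g + 1) +
      ∑ t ∈ Icc 1 (2 * g + 1), c t • AdjoinRoot.root f ^ (2 * g + 1 - t) = 0 := by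
    rw [← Polynomial.aeval_X_pow_add_sum, ← hf, AdjoinRoot.aeval_eq, AdjoinRoot.mk_self]
  have hp : p = fun i : Fin (2 * g + 1) => pFamily g c (AdjoinRoot.root f ^ ·) i := by
    funext i
    by_cases hi : (i : ℕ) ≤ g
    · simp only [pFamily, if_pos hi, hp1 i hi]
    · simp only [pFamily, if_neg hi, hp2 i (not_le.mp hi)]
  have hψ (i j : Fin (2 * g + 1)) :
      τ (p i * p j) = if (i : ℕ) + (j : ℕ) = 2 * g then 1 else 0 := by
    rw [hp]
    exact map_pFamily_mul_pFamily τ _ (isFundamentalSolution_map_pow τ _ hτ hx)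
      (by omega) (by omega)
  have hspan := AdjoinRoot.span_range_pFamily_root_pow (hf ▸ Polynomial.monic_X_pow_add_sum _ c)
    (hf ▸ Polynomial.natDegree_X_pow_add_sum_le _ c) c
  exact ⟨⟨linearIndependent_of_map_mul_eq_ite τ hψ, hp ▸ hspan⟩, hψ⟩
end

section
/- Let I = {i₁ < ⋯ < i_r} and J = {j₁ < ⋯ < j_s} be subsets of {g+1, …, 2g}. Then β(p_I, p_J) = 0 if J ≠ I^c (the complement of I in {g+1, …, 2g}), and if J = I^c then β(p_I, p_J) = (−1)^{s(s+1)/2}·ε(σ), where σ is the permutation of {g+1, …, 2g} sending i_r, …, i₁ to 2g, …, 2g+1−r and sending j_s, …, j₁ to 2g−r, …, g+1, respectively, and ε(σ) is its sign. -/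
/-!
Up to the sign `(-1)^s` produced by `*`, `p_I ∧ (p_J)*` is the wedge of the basis vectors
indexed by the list `(i_r, …, i_1, j_1, …, j_s)`. It vanishes if `I ∩ J ≠ ∅`, and if `I`, `J`
are disjoint with `J ≠ Iᶜ` it has degree `r + s ≠ g`; either way `β(p_I, p_J) = 0`.
If `J = Iᶜ`, the list is `σ⁻¹` applied to `(g-1, …, g-r, 0, …, s-1)`, whereas the top monomial
`p_{2g} ∧ ⋯ ∧ p_{g+1}` is the wedge along `(g-1, …, 0)`. The two orderings differ by `σ⁻¹` and the
reversal of the block `0, …, s-1`, of sign `(-1)^{s(s-1)/2}`; together with `(-1)^s` this gives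
`(-1)^{s(s+1)/2} ε(σ)`.
-/

/-- The descending wedge monomial `p_I = p_{i_r} ∧ ⋯ ∧ p_{i_1}` (for `I = {i₁ < ⋯ < i_r}`) in
the model `⋀* (Fin g → k)` of the spin representation `S = ⋀*E`, where the standard basis
vector `e_j` corresponds to the basis vector `p_{g+1+j}` of `E` (so subsets of
`{g+1, …, 2g}` are recorded as finsets of `Fin g` via the shift `i ↦ i − (g+1)`). -/
noncomputable def eMon (k : Type*) [Field k] (g : ℕ) (J : Finset (Fin g)) :
    ExteriorAlgebra k (Fin g → k) :=
  ((J.sort (· ≤ ·)).reverse.map fun j => ExteriorAlgebra.ι k (Pi.single j (1 : k))).prod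

open Equiv Finset

namespace ExteriorAlgebra

variable {R M α : Type*} [CommRing R] [AddCommGroup M] [Module R M]

variable (R) in
noncomputable def listWedge (v : α → M) (l : List α) : ExteriorAlgebra R M :=
  (l.map fun j => ι R (v j)).prod

theorem listWedge_eq_ιMulti (v : α → M) (l : List α) :
    listWedge R v l = ιMulti R l.length fun i => v l[i] := by
  rw [listWedge, ιMulti_apply, ← List.ofFn_getElem_eq_map]
  rfl

theorem listWedge_append (v : α → M) (l l' : List α) :
    listWedge R v (l ++ l') = listWedge R v l * listWedge R v l' := by
  simp only [listWedge, List.map_append, List.prod_append]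

theorem listWedge_mem_exteriorPower (v : α → M) (l : List α) :
    listWedge R v l ∈ ⋀[R]^l.length M := by
  rw [listWedge_eq_ιMulti]
  exact ιMulti_range R _ (Set.mem_range_self _)

theorem listWedge_eq_zero_of_not_nodup (v : α → M) {l : List α} (hl : ¬ l.Nodup) :
    listWedge R v l = 0 := by
  obtain ⟨i, j, hij, he⟩ : ∃ i j : Fin l.length, l.get i = l.get j ∧ i ≠ j := by
    simpa [List.nodup_iff_injective_get, Function.Injective] using hl
  rw [listWedge_eq_ιMulti]
  exact AlternatingMap.map_eq_zero_of_eq _ _ (congrArg v hij) he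

theorem listWedge_ofFn_perm {n : ℕ} (v : Fin n → M) (τ : Perm (Fin n)) :
    listWedge R v (List.ofFn τ) = ((Perm.sign τ : ℤ) : R) • ιMulti R n v := by
  rw [Int.cast_smul_eq_zsmul, ← Units.smul_def, ← AlternatingMap.map_perm, listWedge,
    List.map_ofFn, ιMulti_apply]
  rfl

theorem involute_reverse_listWedge (v : α → M) (l : List α) :
    CliffordAlgebra.involute (CliffordAlgebra.reverse (listWedge R v l)) =
      (-1 : R) ^ l.length • listWedge R v l.reverse := by
  have h : ∀ l : List α, listWedge R v l = ((l.map v).map (CliffordAlgebra.ι _)).prod := by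
    intro l
    rw [List.map_map]
    rfl
  rw [h, h, CliffordAlgebra.reverse_prod_map_ι, ← List.map_reverse, ← List.map_reverse,
    CliffordAlgebra.involute_prod_map_ι, List.length_map, List.length_reverse]

theorem proj_listWedge (v : α → M) (l : List α) (n : ℕ) :
    GradedAlgebra.proj (fun i : ℕ => ⋀[R]^i M) n (listWedge R v l) =
      if l.length = n then listWedge R v l else 0 := by
  rw [GradedAlgebra.proj_apply]
  split_ifs with h
  · exact DirectSum.decompose_of_mem_same _ (h ▸ listWedge_mem_exteriorPower v l)
  · exact DirectSum.decompose_of_mem_ne _ (listWedge_mem_exteriorPower v l) h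

theorem ιMulti_basis_ne_zero [Nontrivial R] {n : ℕ} (b : Module.Basis (Fin n) R M) :
    ιMulti R n b ≠ 0 := by
  intro h
  have := congrArg (liftAlternating (Pi.single (M := fun i => M [⋀^Fin i]→ₗ[R] R) n b.det)) h
  rw [liftAlternating_apply_ιMulti, Pi.single_eq_same, b.det_self, map_zero] at this
  exact one_ne_zero this

end ExteriorAlgebra

namespace Fin

def revPrefix {n : ℕ} (m : ℕ) (hm : m ≤ n) : Perm (Fin n) :=
  Function.Involutive.toPerm (fun x => if x.val < m then ⟨m - 1 - x, by omega⟩ else x)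
    (fun x => by dsimp only; split_ifs <;> ext <;> simp_all <;> omega)

theorem val_revPrefix {n m : ℕ} (hm : m ≤ n) (x : Fin n) :
    (revPrefix m hm x : ℕ) = if x.val < m then m - 1 - x else x := by
  change ((if x.val < m then ⟨m - 1 - x, by omega⟩ else x : Fin n) : ℕ) = _
  split_ifs <;> rfl

theorem sign_revPrefix {n : ℕ} : ∀ (m : ℕ) (hm : m ≤ n),
    Perm.sign (revPrefix m hm) = (-1) ^ (m * (m - 1) / 2)
  | 0, hm => by
    rw [show revPrefix 0 hm = 1 from Equiv.ext fun x => Fin.ext (by simp [val_revPrefix]),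
      map_one, Nat.zero_mul, Nat.zero_div, pow_zero]
  | m + 1, hm => by
    -- reversing `0, …, m` is reversing `0, …, m - 1` followed by the cycle `(0 1 … m)`
    have hcycle : revPrefix (m + 1) hm = cycleRange ⟨m, hm⟩ * revPrefix m (by omega) := by
      ext x
      rw [Perm.mul_apply]
      rcases lt_trichotomy x.val m with h | h | h
      · have hx : (revPrefix m (by omega) x : ℕ) = m - 1 - x := by
          rw [val_revPrefix, if_pos h]
        rw [coe_cycleRange_of_lt (by rw [Fin.lt_def, hx]; dsimp only; omega), hx,
          val_revPrefix, if_pos (by omega)]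
        omega
      · have hx : revPrefix m (by omega) x = ⟨m, hm⟩ := by
          ext; rw [val_revPrefix, if_neg (by omega), h]
        rw [hx, coe_cycleRange_of_le le_rfl, if_pos rfl, val_revPrefix, if_pos (by omega)]
        omega
      · have hx : revPrefix m (by omega) x = x := by
          ext; rw [val_revPrefix, if_neg (by omega)]
        rw [hx, cycleRange_of_gt (by rw [Fin.lt_def]; dsimp only; omega), val_revPrefix,
          if_neg (by omega)]
    rw [hcycle, map_mul, sign_cycleRange, sign_revPrefix m, ← pow_add, Nat.triangle_succ,
      add_comm]

end Fin

open ExteriorAlgebra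

theorem Finset.eq_compl_of_disjoint_of_card_add {α : Type*} [Fintype α] [DecidableEq α]
    {s t : Finset α} (hst : Disjoint s t) (hcard : #s + #t = Fintype.card α) : t = sᶜ :=
  eq_of_subset_of_card_le (subset_compl_iff_disjoint_left.mpr hst)
    (by rw [card_compl]; omega)

theorem Finset.sort_reverse_append_sort_compl_eq_ofFn {g : ℕ} (I : Finset (Fin g))
    (σ : Perm (Fin g)) (hσI : ∀ t : Fin #I, (σ (I.orderEmbOfFin rfl t) : ℕ) = g - #I + t)
    (hσIc : ∀ t : Fin #Iᶜ, (σ (Iᶜ.orderEmbOfFin rfl t) : ℕ) = t) :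
    (I.sort (· ≤ ·)).reverse ++ Iᶜ.sort (· ≤ ·) =
      List.ofFn (σ.symm * Fin.revPrefix #Iᶜ (card_le_univ _ |>.trans_eq (Fintype.card_fin g)) *
        (Fin.revPerm : Perm (Fin g))) := by
  have hcard : #Iᶜ = g - #I := by rw [card_compl, Fintype.card_fin]
  have hI : #I ≤ g := card_le_univ I |>.trans_eq (Fintype.card_fin g)
  apply List.ext_getElem (by simp)
  intro t ht ht'
  simp only [List.getElem_ofFn, Perm.mul_apply, Fin.revPerm_apply]
  rw [eq_comm, Equiv.symm_apply_eq]
  ext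
  rw [Fin.val_revPrefix, Fin.val_rev, Fin.val_mk]
  rw [List.length_ofFn] at ht'
  have hσI' (i : ℕ) (hi : i < (I.sort (· ≤ ·)).length) :
      (σ (I.sort (· ≤ ·))[i] : ℕ) = g - #I + i := by
    simpa [orderEmbOfFin_apply] using hσI ⟨i, by simpa using hi⟩
  have hσIc' (i : ℕ) (hi : i < (Iᶜ.sort (· ≤ ·)).length) : (σ (Iᶜ.sort (· ≤ ·))[i] : ℕ) = i := by
    simpa [orderEmbOfFin_apply] using hσIc ⟨i, by simpa using hi⟩
  by_cases htI : t < #I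
  · rw [List.getElem_append_left (by simpa using htI), List.getElem_reverse, hσI', length_sort,
      if_neg (by omega)]
    omega
  · rw [List.getElem_append_right (by simpa using htI), hσIc', List.length_reverse, length_sort,
      if_pos (by omega)]
    omega

section SpinForm

variable {k : Type*} [Field k] {g : ℕ}

theorem eMon_eq_listWedge (J : Finset (Fin g)) :
    eMon k g J = listWedge k (fun j => Pi.single j 1) (J.sort (· ≤ ·)).reverse := rfl

theorem eMon_mul_involute_reverse (I J : Finset (Fin g)) :
    eMon k g I * CliffordAlgebra.involute (CliffordAlgebra.reverse (eMon k g J)) =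
      (-1 : k) ^ #J • listWedge k (fun j => Pi.single j 1)
        ((I.sort (· ≤ ·)).reverse ++ J.sort (· ≤ ·)) := by
  rw [eMon_eq_listWedge, eMon_eq_listWedge, involute_reverse_listWedge, List.reverse_reverse,
    List.length_reverse, length_sort, mul_smul_comm, listWedge_append]

theorem ιMulti_single_ne_zero : ιMulti k g (fun j => Pi.single j (1 : k)) ≠ 0 := by
  convert ιMulti_basis_ne_zero (Pi.basisFun k (Fin g))
  exact (Pi.basisFun_apply k (Fin g) _).symm

theorem eMon_univ : eMon k g univ =
    ((Perm.sign (Fin.revPerm : Perm (Fin g)) : ℤ) : k) • ιMulti k g fun j => Pi.single j 1 := by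
  have hrev : (univ.sort (· ≤ ·)).reverse = List.ofFn (Fin.revPerm : Perm (Fin g)) :=
    List.ext_getElem (by simp) fun t _ _ => by simp [Fin.ext_iff, Fin.sort_univ]; omega
  rw [eMon_eq_listWedge, hrev, listWedge_ofFn_perm]

theorem eMon_univ_ne_zero : eMon k g univ ≠ 0 := by
  rw [eMon_univ]
  refine smul_ne_zero ?_ ιMulti_single_ne_zero
  rcases Int.units_eq_one_or (Perm.sign (Fin.revPerm : Perm (Fin g))) with h | h <;> simp [h]

theorem proj_eMon_mul_involute_reverse_of_ne_compl {I J : Finset (Fin g)} (hJ : J ≠ Iᶜ) :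
    GradedAlgebra.proj (fun i : ℕ => ⋀[k]^i (Fin g → k)) g
      (eMon k g I * CliffordAlgebra.involute (CliffordAlgebra.reverse (eMon k g J))) = 0 := by
  rw [eMon_mul_involute_reverse, map_smul, proj_listWedge, ite_eq_right_iff.mpr, smul_zero]
  intro hlen
  by_cases hnd : ((I.sort (· ≤ ·)).reverse ++ J.sort (· ≤ ·)).Nodup
  · refine absurd (eq_compl_of_disjoint_of_card_add ?_ (by simpa using hlen)) hJ
    exact disjoint_left.mpr fun a haI haJ =>
      (List.nodup_append.mp hnd).2.2 a (by simpa) a (by simpa) rfl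
  · exact listWedge_eq_zero_of_not_nodup _ hnd

theorem proj_eMon_mul_involute_reverse_compl (I : Finset (Fin g)) (σ : Perm (Fin g))
    (hσI : ∀ t : Fin #I, (σ (I.orderEmbOfFin rfl t) : ℕ) = g - #I + t)
    (hσIc : ∀ t : Fin #Iᶜ, (σ (Iᶜ.orderEmbOfFin rfl t) : ℕ) = t) :
    GradedAlgebra.proj (fun i : ℕ => ⋀[k]^i (Fin g → k)) g
        (eMon k g I * CliffordAlgebra.involute (CliffordAlgebra.reverse (eMon k g Iᶜ))) =
      ((-1 : k) ^ #Iᶜ * ((Perm.sign σ : ℤ) : k) * (-1) ^ (#Iᶜ * (#Iᶜ - 1) / 2) *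
        ((Perm.sign (Fin.revPerm : Perm (Fin g)) : ℤ) : k)) • ιMulti k g fun j => Pi.single j 1 := by
  rw [eMon_mul_involute_reverse, map_smul, proj_listWedge,
    sort_reverse_append_sort_compl_eq_ofFn I σ hσI hσIc, List.length_ofFn, if_pos rfl,
    listWedge_ofFn_perm, smul_smul]
  simp only [map_mul, Perm.sign_symm, Fin.sign_revPrefix, Units.val_mul, Int.cast_mul,
    Units.val_pow_eq_pow_val, Units.val_neg, Units.val_one, Int.cast_pow, Int.cast_neg,
    Int.cast_one, mul_assoc]

end SpinForm

/-- For `I = {i₁ < ⋯ < i_r}` and `J = {j₁ < ⋯ < j_s}` subsets of `{g+1, …, 2g}`, one has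
`β(p_I, p_J) = 0` if `J ≠ Iᶜ`, and if `J = Iᶜ` then `β(p_I, p_J) = (−1)^{s(s+1)/2}·ε(σ)`,
where `σ` is the permutation of `{g+1, …, 2g}` sending `i_r, …, i₁` to `2g, …, 2g+1−r` and
`j_s, …, j₁` to `2g−r, …, g+1` respectively.  (Here everything is written in the shifted
indexing `{g+1, …, 2g} ≃ Fin g`, `i ↦ i − (g+1)`, under which `σ` sends the `t`-th smallest
element of `I` to `g − r + t` and the `t`-th smallest element of `J` to `t`, `0`-indexed.) -/
theorem stmt_3
    (k : Type*) [Field k]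
    (g : ℕ)
    -- the bilinear form `β` on `S`: `β ω ω'` is the coefficient of `p_{2g} ∧ ⋯ ∧ p_{g+1}`
    -- in `ω ∧ (ω')*`, where `(ω')* = involute (reverse ω')`:
    (β : ExteriorAlgebra k (Fin g → k) →ₗ[k] ExteriorAlgebra k (Fin g → k) →ₗ[k] k)
    (hβ : ∀ s s' : ExteriorAlgebra k (Fin g → k),
      GradedAlgebra.proj (fun i : ℕ => ⋀[k]^i (Fin g → k)) g
          (s * CliffordAlgebra.involute (CliffordAlgebra.reverse s')) =
        β s s' • eMon k g Finset.univ)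
    (I J : Finset (Fin g)) :
    (J ≠ Iᶜ → β (eMon k g I) (eMon k g J) = 0) ∧
    (J = Iᶜ → ∀ σ : Equiv.Perm (Fin g),
      (∀ t : Fin I.card, σ ↑(I.orderIsoOfFin rfl t) =
        ⟨g - I.card + (t : ℕ), by
          have h := Finset.card_le_univ I
          rw [Fintype.card_fin] at h
          have := t.isLt
          omega⟩) →
      (∀ t : Fin J.card, σ ↑(J.orderIsoOfFin rfl t) =
        ⟨(t : ℕ), by
          have h := Finset.card_le_univ J
          rw [Fintype.card_fin] at h
          have := t.isLt
          omega⟩) →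
      β (eMon k g I) (eMon k g J) =
        (-1 : k) ^ (J.card * (J.card + 1) / 2) * ((Equiv.Perm.sign σ : ℤ) : k)) := by
  refine ⟨fun hJ => ?_, fun hJ σ hσI hσJ => ?_⟩
  · have h := hβ (eMon k g I) (eMon k g J)
    rw [proj_eMon_mul_involute_reverse_of_ne_compl hJ, eq_comm, smul_eq_zero] at h
    exact h.resolve_right eMon_univ_ne_zero
  subst hJ
  have h := hβ (eMon k g I) (eMon k g Iᶜ)
  rw [proj_eMon_mul_involute_reverse_compl I σ (fun t => by rw [← coe_orderIsoOfFin_apply, hσI])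
    (fun t => by rw [← coe_orderIsoOfFin_apply, hσJ]), eMon_univ, smul_smul] at h
  have hcoeff := smul_left_injective k ιMulti_single_ne_zero h
  have hrev : ((Perm.sign (Fin.revPerm : Perm (Fin g)) : ℤ) : k) ^ 2 = 1 := by
    rw [← Int.cast_pow, ← Units.val_pow_eq_pow_val, Int.units_sq, Units.val_one, Int.cast_one]
  rw [show #Iᶜ * (#Iᶜ + 1) / 2 = #Iᶜ * (#Iᶜ - 1) / 2 + #Iᶜ by
    simpa [mul_comm] using Nat.triangle_succ #Iᶜ, pow_add]
  linear_combination (-((Perm.sign (Fin.revPerm : Perm (Fin g)) : ℤ) : k)) * hcoeff +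
    ((-1) ^ (#Iᶜ * (#Iᶜ - 1) / 2) * (-1) ^ #Iᶜ * ((Perm.sign σ : ℤ) : k) -
      β (eMon k g I) (eMon k g Iᶜ)) * hrev
end

section
/- For every x ∈ Γ, every y ∈ C(V), and every 0 ≤ r ≤ 2g+1, writing θ_r(y) for the component of θ(y) in ⋀^rV, one has θ_r(σ(x)·y·x^{−1}) = (det ρ(x))^{r−1}·(⋀^r ρ(x))(θ_r(y)). Equivalently, θ : C(V) → ⋀*V is an isomorphism of Γ-modules, where Γ acts on C(V) by y ↦ σ(x)yx^{−1} and on ⋀^rV by (det ρ(x))^{r−1}·⋀^r ρ(x). -/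
/-!
Let `e₁, …, eₙ` (`n = 2g+1`) be a `ψ`-orthogonal basis and `ω = e₁⋯eₙ ∈ C(V)` its volume element;
since `n` is odd and `ψ` is nondegenerate, `ω` is central and invertible. Pushing `σ(x)` through
`ω` factor by factor gives `σ(x) ω = ρ(e₁)⋯ρ(eₙ) x = det ρ(x) · ω x`, hence `σ(x) = det ρ(x) · x`.
So `y ↦ σ(x) y x⁻¹` is `det ρ(x)` times the untwisted conjugation by `x`, which is the algebra
automorphism of `C(V)` induced by the isometry `det ρ(x) · ρ(x)`. The map `θ` is Chevalley's
identification `changeForm` of `C(V)` with `⋀V`, which is natural with respect to isometries, and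
`⋀(c • f) = c ^ r • ⋀f` on `⋀^r V`; as `det ρ(x) ^ 2 = 1`, the factor `det ρ(x) ^ (1 + r)` is
`det ρ(x) ^ (r - 1)`.
-/

open CliffordAlgebra

theorem iterate_mul_prod_map {M α : Type*} [Monoid M] (τ : M → M) (f g : α → M) (x : M)
    (h : ∀ n a, τ^[n] x * f a = g a * τ^[n + 1] x) (l : List α) (n : ℕ) :
    τ^[n] x * (l.map f).prod = (l.map g).prod * τ^[n + l.length] x := by
  induction l generalizing n with
  | nil => simp
  | cons a l ih =>
    rw [List.map_cons, List.prod_cons, ← mul_assoc, h, mul_assoc, ih, List.map_cons,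
      List.prod_cons, mul_assoc, List.length_cons, Nat.add_right_comm, add_assoc]

theorem mul_prod_ofFn_eq_smul {R A : Type*} [CommSemiring R] [Semiring A] [Algebra R A]
    {n : ℕ} (y : A) (f : Fin n → A) (c : Fin n → R) (h : ∀ j, y * f j = c j • (f j * y)) :
    y * (List.ofFn f).prod = (∏ j, c j) • ((List.ofFn f).prod * y) := by
  induction n with
  | zero => simp
  | succ n ih =>
    rw [List.ofFn_succ, List.prod_cons, ← mul_assoc, h, smul_mul_assoc, mul_assoc,
      ih (fun j => f j.succ) (fun j => c j.succ) (fun j => h j.succ), Fin.prod_univ_succ,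
      mul_smul_comm, smul_smul, mul_assoc]

theorem AlternatingMap.apply_eq_det_smul {R M N ι : Type*} [CommRing R] [AddCommGroup M]
    [Module R M] [AddCommGroup N] [Module R N] [Fintype ι] [DecidableEq ι]
    (e : Module.Basis ι R M) (f : M [⋀^ι]→ₗ[R] N) (v : ι → M) : f v = e.det v • f e := by
  have key : f = (LinearMap.toSpanSingleton R N (f e)).compAlternatingMap e.det := by
    refine e.ext_alternating fun i hi => ?_
    let σ : Equiv.Perm ι := Equiv.ofBijective i (Finite.injective_iff_bijective.1 hi)
    change f (e ∘ σ) = LinearMap.toSpanSingleton R N (f e) (e.det (e ∘ σ))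
    rw [AlternatingMap.map_perm, AlternatingMap.map_perm,
      Module.Basis.det_self, LinearMap.map_smul_of_tower, LinearMap.toSpanSingleton_apply_one]
  conv_lhs => rw [key]
  rfl

namespace ExteriorAlgebra

variable {R M N : Type*} [CommRing R] [AddCommGroup M] [Module R M] [AddCommGroup N] [Module R N]

theorem map_mem_exteriorPower (f : M →ₗ[R] N) {i : ℕ} {ω : ExteriorAlgebra R M}
    (hω : ω ∈ ⋀[R]^i M) : map f ω ∈ ⋀[R]^i N := by
  have hι : (LinearMap.range (ι R (M := M))).map (map f).toLinearMap ≤ LinearMap.range (ι R) := by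
    rw [ι_range_map_map]
    exact LinearMap.map_le_range
  have hmap := Submodule.mem_map_of_mem (f := (map f).toLinearMap) hω
  rw [Submodule.map_pow] at hmap
  exact pow_le_pow_left' hι i hmap

def gradedMap (f : M →ₗ[R] N) : (fun i : ℕ => ⋀[R]^i M) →+*ᵍ (fun i : ℕ => ⋀[R]^i N) where
  toRingHom := (map f).toRingHom
  map_mem := map_mem_exteriorPower f

theorem proj_map (f : M →ₗ[R] N) (r : ℕ) (ω : ExteriorAlgebra R M) :
    GradedAlgebra.proj (fun i : ℕ => ⋀[R]^i N) r (map f ω) =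
      map f (GradedAlgebra.proj (fun i : ℕ => ⋀[R]^i M) r ω) := by
  rw [GradedAlgebra.proj_apply, GradedAlgebra.proj_apply]
  exact ((gradedMap f).map_directSumDecompose).symm

theorem map_smul_of_mem (c : R) (f : M →ₗ[R] N) {r : ℕ} {ω : ExteriorAlgebra R M}
    (hω : ω ∈ ⋀[R]^r M) : map (c • f) ω = c ^ r • map f ω := by
  induction hω using Submodule.pow_induction_on_left' with
  | algebraMap a => rw [AlgHom.commutes, AlgHom.commutes, pow_zero, one_smul]
  | add x y i _ _ ihx ihy => rw [map_add, map_add, ihx, ihy, smul_add]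
  | mem_mul m hm i x _ ih =>
    obtain ⟨w, rfl⟩ := hm
    rw [map_mul, map_mul, ih, map_apply_ι, map_apply_ι, LinearMap.smul_apply, map_smul,
      smul_mul_smul_comm, pow_succ']

theorem map_contractLeft (f : M →ₗ[R] N) (d : Module.Dual R N) (ω : ExteriorAlgebra R M) :
    map f (contractLeft (d ∘ₗ f) ω) = contractLeft d (map f ω) := by
  induction ω using CliffordAlgebra.left_induction with
  | algebraMap a => rw [contractLeft_algebraMap, map_zero, AlgHom.commutes, contractLeft_algebraMap]
  | add a b ha hb => rw [map_add, map_add, ha, hb, map_add, map_add]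
  | ι_mul m ω ih =>
    rw [contractLeft_ι_mul, map_sub, map_smul, map_mul, map_apply_ι, map_mul, map_apply_ι,
      contractLeft_ι_mul, ih, LinearMap.comp_apply]

end ExteriorAlgebra

namespace CliffordAlgebra

section CommRing

variable {R M : Type*} [CommRing R] [AddCommGroup M] [Module R M] {Q : QuadraticForm R M}

theorem contractLeft_prod_map_ι_eq_zero (d : Module.Dual R M) (l : List M)
    (h : ∀ a ∈ l, d a = 0) : contractLeft d (l.map (ι Q)).prod = 0 := by
  induction l with
  | nil => exact contractLeft_one (Q := Q) d
  | cons a l ih =>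
    rw [List.map_cons, List.prod_cons, contractLeft_ι_mul, h a List.mem_cons_self,
      ih fun b hb => h b (List.mem_cons_of_mem _ hb), mul_zero, zero_smul, sub_zero]

theorem mul_eq_map_mul (f : Q →qᵢ Q) {u : CliffordAlgebra Q}
    (hu : ∀ v, u * ι Q v = ι Q (f v) * u) (z : CliffordAlgebra Q) : u * z = map f z * u := by
  induction z using CliffordAlgebra.induction with
  | algebraMap a => rw [AlgHom.commutes]; exact (Algebra.commutes a u).symm
  | ι v => rw [map_apply_ι]; exact hu v
  | mul a b ha hb => rw [← mul_assoc, ha, mul_assoc, hb, ← mul_assoc, map_mul]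
  | add a b ha hb => rw [mul_add, ha, hb, map_add, add_mul]

variable {B : LinearMap.BilinForm R M} (h : B.toQuadraticMap = 0 - Q)

theorem changeForm_prod_map_ι (l : List M) (hl : l.Pairwise fun a b => B a b = 0) :
    changeForm h (l.map (ι Q)).prod = (l.map (ExteriorAlgebra.ι R)).prod := by
  induction l with
  | nil => simp
  | cons a l ih =>
    obtain ⟨ha, hl⟩ := List.pairwise_cons.mp hl
    rw [List.map_cons, List.prod_cons, changeForm_ι_mul, ih hl, List.map_cons, List.prod_cons,
      contractLeft_prod_map_ι_eq_zero _ _ ha, sub_zero]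

theorem changeForm_map (f : Q →qᵢ Q) (hf : ∀ a b, B (f a) (f b) = B a b)
    (z : CliffordAlgebra Q) :
    changeForm h (map f z) = ExteriorAlgebra.map f.toLinearMap (changeForm h z) := by
  induction z using left_induction with
  | algebraMap a => simp
  | add a b ha hb => rw [map_add, map_add, ha, hb, map_add, map_add]
  | ι_mul z m ih =>
    have hBm : B m = B (f m) ∘ₗ f.toLinearMap := LinearMap.ext fun b => (hf m b).symm
    rw [map_mul, map_apply_ι, changeForm_ι_mul, ih, changeForm_ι_mul, map_sub, map_mul,
      ExteriorAlgebra.map_apply_ι, hBm, ExteriorAlgebra.map_contractLeft]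
    rfl

end CommRing

section Field

variable {k V : Type*} [Field k] [AddCommGroup V] [Module k V]
  {ψ : LinearMap.BilinForm k V} {Q : QuadraticForm k V}

theorem neg_toQuadraticMap_eq (hQ : ∀ v, Q v = ψ v v) : (-ψ).toQuadraticMap = 0 - Q := by
  ext v
  simp [hQ v]

theorem apply_one_eq_changeForm (hQ : ∀ v, Q v = ψ v v)
    (Θ' : CliffordAlgebra Q →ₐ[k] Module.End k (ExteriorAlgebra k V))
    (hΘ' : ∀ v ω, Θ' (ι Q v) ω = ExteriorAlgebra.ι k v * ω + contractLeft (ψ v) ω)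
    (y : CliffordAlgebra Q) : Θ' y 1 = changeForm (neg_toQuadraticMap_eq hQ) y := by
  induction y using left_induction with
  | algebraMap a =>
    rw [changeForm_algebraMap, AlgHom.commutes, Module.algebraMap_end_apply,
      Algebra.algebraMap_eq_smul_one]
  | add a b ha hb => rw [map_add, map_add, LinearMap.add_apply, ha, hb]
  | ι_mul y v ih =>
    rw [map_mul, Module.End.mul_apply, hΘ', ih, changeForm_ι_mul, LinearMap.neg_apply, map_neg,
      LinearMap.neg_apply, sub_neg_eq_add]

theorem isOrtho_of_apply_eq_zero (hQ : ∀ v, Q v = ψ v v) (hsymm : ∀ v w, ψ v w = ψ w v)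
    {a b : V} (h : ψ a b = 0) : Q.IsOrtho a b := by
  change Q (a + b) = Q a + Q b
  simp only [hQ, map_add, LinearMap.add_apply, h, hsymm b a]
  ring

theorem apply_map_map_eq_of_map_app_eq (h2 : (2 : k) ≠ 0) (hQ : ∀ v, Q v = ψ v v)
    (hsymm : ∀ v w, ψ v w = ψ w v) {f : V →ₗ[k] V} (hf : ∀ v, Q (f v) = Q v) (a b : V) :
    ψ (f a) (f b) = ψ a b := by
  have hab := hf (a + b)
  have ha := hf a
  have hb := hf b
  simp only [map_add, hQ, LinearMap.add_apply] at hab ha hb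
  refine mul_left_cancel₀ h2 ?_
  linear_combination hab - ha - hb + hsymm (f a) (f b) - hsymm a b

theorem det_mul_self_eq_one [FiniteDimensional k V] (hnd : ψ.Nondegenerate) {f : V →ₗ[k] V}
    (hf : ∀ a b, ψ (f a) (f b) = ψ a b) : LinearMap.det f * LinearMap.det f = 1 := by
  let b := Module.finBasis k V
  have hcomp : ψ.comp f f = ψ := LinearMap.ext₂ hf
  have hdet := congrArg Matrix.det (congrArg (LinearMap.BilinForm.toMatrix b) hcomp)
  rw [LinearMap.BilinForm.toMatrix_comp b b, Matrix.det_mul, Matrix.det_mul,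
    Matrix.det_transpose, LinearMap.det_toMatrix] at hdet
  have hψ : (LinearMap.BilinForm.toMatrix b ψ).det ≠ 0 :=
    (LinearMap.BilinForm.nondegenerate_iff_det_ne_zero b).mp hnd
  refine mul_left_cancel₀ hψ ?_
  linear_combination hdet

theorem commute_prod_ofFn_ι_basis (hQ : ∀ v, Q v = ψ v v) (hsymm : ∀ v w, ψ v w = ψ w v)
    {n : ℕ} (hn : Odd n) (e : Module.Basis (Fin n) k V) (he : ψ.IsOrthoᵢ e)
    (z : CliffordAlgebra Q) : Commute (List.ofFn fun i => ι Q (e i)).prod z := by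
  set ω := (List.ofFn fun i => ι Q (e i)).prod
  have hsign : ∀ i : Fin n, ∏ j, (if j = i then 1 else -1 : k) = 1 := fun i => by
    rw [Finset.prod_ite, Finset.prod_const_one, one_mul, Finset.prod_const, Finset.filter_ne',
      Finset.card_erase_of_mem (Finset.mem_univ i), Finset.card_univ, Fintype.card_fin]
    exact (Nat.Odd.sub_odd hn odd_one).neg_one_pow
  have hbasis : ∀ i, ι Q (e i) * ω = ω * ι Q (e i) := fun i => by
    rw [mul_prod_ofFn_eq_smul _ _ (fun j => if j = i then 1 else -1 : Fin n → k), hsign,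
      one_smul]
    intro j
    split_ifs with hji
    · rw [hji, one_smul]
    · rw [ι_mul_ι_comm_of_isOrtho (isOrtho_of_apply_eq_zero hQ hsymm (he (Ne.symm hji))),
        neg_one_smul]
  have hι : ∀ v, ω * ι Q v = ι Q v * ω := by
    have hlin : (LinearMap.mulLeft k ω).comp (ι Q) = (LinearMap.mulRight k ω).comp (ι Q) :=
      e.ext fun i => (hbasis i).symm
    exact fun v => LinearMap.congr_fun hlin v
  induction z using CliffordAlgebra.induction with
  | algebraMap a => exact Algebra.commute_algebraMap_right a ω
  | ι v => exact hι v
  | mul a b ha hb => exact ha.mul_right hb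
  | add a b ha hb => exact ha.add_right hb

theorem prod_ofFn_ι_map_eq_det_smul (hQ : ∀ v, Q v = ψ v v) {n : ℕ}
    (e : Module.Basis (Fin n) k V) (he : ψ.IsOrthoᵢ e) {f : V →ₗ[k] V}
    (hf : ∀ a b, ψ (f a) (f b) = ψ a b) :
    (List.ofFn fun i => ι Q (f (e i))).prod =
      LinearMap.det f • (List.ofFn fun i => ι Q (e i)).prod := by
  have hB := neg_toQuadraticMap_eq hQ
  have hθ : ∀ w : Fin n → V, ψ.IsOrthoᵢ w →
      changeForm hB (List.ofFn fun i => ι Q (w i)).prod = ExteriorAlgebra.ιMulti k n w := by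
    intro w hw
    have hpair : (List.ofFn w).Pairwise fun a b => (-ψ) a b = 0 :=
      List.pairwise_ofFn.mpr fun i j hij => by simp [hw hij.ne]
    simpa [List.map_ofFn, Function.comp_def, ExteriorAlgebra.ιMulti_apply] using
      changeForm_prod_map_ι hB _ hpair
  apply (changeFormEquiv hB).injective
  change changeForm hB _ = changeForm hB _
  rw [map_smul, hθ e he, hθ (fun i => f (e i)) fun i j hij => (hf _ _).trans (he hij),
    AlternatingMap.apply_eq_det_smul e]
  congr 1
  rw [← Function.comp_def, e.det_comp, e.det_self, mul_one]

variable {x : CliffordAlgebra Q} {ρ : V →ₗ[k] V}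

theorem iterate_involute_mul_ι (hx : ∀ v, involute x * ι Q v = ι Q (ρ v) * x) (n : ℕ) (v : V) :
    involute^[n] x * ι Q v = ι Q (ρ v) * involute^[n + 1] x := by
  have hinv : ∀ {a b : CliffordAlgebra Q}, involute a * ι Q v = ι Q (ρ v) * involute b →
      a * ι Q v = ι Q (ρ v) * b := fun {a b} h => by
    simpa using congrArg involute h
  induction n with
  | zero =>
    rw [Function.iterate_zero_apply, zero_add, Function.iterate_one]
    exact hinv (by rw [involute_involute]; exact hx v)
  | succ n ih =>
    rw [Function.iterate_succ_apply', Function.iterate_succ_apply' _ (n + 1)]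
    exact hinv (by rwa [involute_involute, involute_involute])

theorem map_app_eq_of_involute_mul_ι [Invertible (2 : k)]
    (hx : ∀ v, involute x * ι Q v = ι Q (ρ v) * x) (hxu : IsUnit x) (v : V) : Q (ρ v) = Q v := by
  have hx' : x * ι Q v = ι Q (ρ v) * involute x := by
    simpa using iterate_involute_mul_ι hx 0 v
  have h : algebraMap k _ (Q (ρ v)) * x = algebraMap k _ (Q v) * x := calc
    algebraMap k _ (Q (ρ v)) * x = ι Q (ρ v) * (ι Q (ρ v) * x) := by
      rw [← mul_assoc, ι_sq_scalar]
    _ = x * ι Q v * ι Q v := by rw [← hx, ← mul_assoc, ← hx']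
    _ = algebraMap k _ (Q v) * x := by rw [mul_assoc, ι_sq_scalar, Algebra.commutes]
  exact (algebraMap k _).injective (hxu.mul_right_cancel h)

theorem involute_eq_det_smul [Invertible (2 : k)] [FiniteDimensional k V]
    (hQ : ∀ v, Q v = ψ v v) (hsymm : ∀ v w, ψ v w = ψ w v) (hnd : ψ.Nondegenerate)
    (hodd : Odd (Module.finrank k V)) (hx : ∀ v, involute x * ι Q v = ι Q (ρ v) * x)
    (hρ : ∀ a b, ψ (ρ a) (ρ b) = ψ a b) : involute x = LinearMap.det ρ • x := by
  obtain ⟨e, he⟩ := LinearMap.BilinForm.exists_orthogonal_basis (B := ψ)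
    ⟨fun v w => by simpa using hsymm v w⟩
  set ω := (List.ofFn fun i => ι Q (e i)).prod
  have hω : IsUnit ω := List.prod_isUnit fun a ha => by
    obtain ⟨i, rfl⟩ := List.mem_ofFn.mp ha
    refine isUnit_ι_of_isUnit Q (Ne.isUnit ?_)
    rw [hQ]
    exact LinearMap.BilinForm.iIsOrtho.not_isOrtho_basis_self_of_nondegenerate he hnd i
  have htwist : involute x * ω = (List.ofFn fun i => ι Q (ρ (e i))).prod * x := by
    have h := iterate_mul_prod_map involute (ι Q) (fun v => ι Q (ρ v)) x
      (iterate_involute_mul_ι hx) (List.ofFn e) 1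
    have heven : Even (1 + Module.finrank k V) := by rw [add_comm]; exact hodd.add_one
    rwa [List.length_ofFn, involute_involutive.iterate_even heven, Function.iterate_one, id,
      List.map_ofFn, List.map_ofFn] at h
  refine hω.mul_right_cancel ?_
  rw [htwist, prod_ofFn_ι_map_eq_det_smul hQ e he hρ, smul_mul_assoc, smul_mul_assoc,
    (commute_prod_ofFn_ι_basis hQ hsymm hodd e he x).eq]

theorem changeForm_mul_mul_inv (hQ : ∀ v, Q v = ψ v v) {u : (CliffordAlgebra Q)ˣ}
    (hu : ∀ v, involute (u : CliffordAlgebra Q) * ι Q v = ι Q (ρ v) * u)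
    (hρ : ∀ a b, ψ (ρ a) (ρ b) = ψ a b) {c : k} (hc : c * c = 1)
    (huc : involute (u : CliffordAlgebra Q) = c • u) (z : CliffordAlgebra Q) :
    changeForm (neg_toQuadraticMap_eq hQ) (u * z * ↑u⁻¹) =
      ExteriorAlgebra.map (c • ρ) (changeForm (neg_toQuadraticMap_eq hQ) z) := by
  have hcρ : ∀ a b, ψ ((c • ρ) a) ((c • ρ) b) = ψ a b := fun a b => by
    simp only [LinearMap.smul_apply, map_smul, smul_eq_mul, hρ, ← mul_assoc, hc, one_mul]
  let f : Q →qᵢ Q := ⟨c • ρ, fun v => (hQ _).trans ((hcρ v v).trans (hQ v).symm)⟩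
  have hconj : (u : CliffordAlgebra Q) * z = map f z * u := by
    refine mul_eq_map_mul f (fun v => ?_) z
    -- `u = c • σ(u)` as `c * c = 1`
    conv_lhs => rw [← one_smul k (u : CliffordAlgebra Q), ← hc, ← smul_smul, ← huc]
    rw [smul_mul_assoc, hu, ← smul_mul_assoc, ← map_smul]
    rfl
  rw [hconj, Units.mul_inv_cancel_right, changeForm_map _ f fun a b => congrArg Neg.neg (hcρ a b)]

end Field

end CliffordAlgebra

theorem stmt_5_general
    (k : Type*) [Field k] (h2 : (2 : k) ≠ 0)
    (g : ℕ)
    (V : Type*) [AddCommGroup V] [Module k V]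
    (ψ : LinearMap.BilinForm k V)
    (hsymm : ∀ v w : V, ψ v w = ψ w v)
    (hnd : ψ.Nondegenerate)
    (hdim : Module.finrank k V = 2 * g + 1) [FiniteDimensional k V]
    (Q : QuadraticForm k V) (hQ : ∀ v : V, Q v = ψ v v)
    -- the `C(V)`-module structure on `⋀*V`:
    (Θ' : CliffordAlgebra Q →ₐ[k] Module.End k (ExteriorAlgebra k V))
    (hΘ' : ∀ (v : V) (ω : ExteriorAlgebra k V),
      Θ' (ι Q v) ω = ExteriorAlgebra.ι k v * ω + contractLeft (ψ v) ω)
    -- an element `x` of the Clifford group `Γ`, with `ρ(x)`: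
    (x : (CliffordAlgebra Q)ˣ)
    (ρx : V →ₗ[k] V)
    (hρx : ∀ v : V, ι Q (ρx v) =
      involute (x : CliffordAlgebra Q) * ι Q v * (↑x⁻¹ : CliffordAlgebra Q)) :
    ∀ (y : CliffordAlgebra Q) (r : ℕ), r ≤ 2 * g + 1 →
      GradedAlgebra.proj (fun i : ℕ => ⋀[k]^i V) r
          (Θ' (involute (x : CliffordAlgebra Q) * y * (↑x⁻¹ : CliffordAlgebra Q))
            (1 : ExteriorAlgebra k V)) =
        (LinearMap.det ρx) ^ ((r : ℤ) - 1) •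
          ExteriorAlgebra.map ρx
            (GradedAlgebra.proj (fun i : ℕ => ⋀[k]^i V) r (Θ' y (1 : ExteriorAlgebra k V))) := by
  intro y r _
  have : Invertible (2 : k) := invertibleOfNonzero h2
  have hx : ∀ v, involute (x : CliffordAlgebra Q) * ι Q v = ι Q (ρx v) * x := fun v => by
    rw [hρx, Units.inv_mul_cancel_right]
  have hρ : ∀ a b, ψ (ρx a) (ρx b) = ψ a b :=
    apply_map_map_eq_of_map_app_eq h2 hQ hsymm (map_app_eq_of_involute_mul_ι hx x.isUnit)
  set d := LinearMap.det ρx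
  have hd : d * d = 1 := det_mul_self_eq_one hnd hρ
  have hσ : involute (x : CliffordAlgebra Q) = d • x :=
    involute_eq_det_smul hQ hsymm hnd (hdim ▸ odd_two_mul_add_one g) hx hρ
  have hmem : GradedAlgebra.proj (fun i : ℕ => ⋀[k]^i V) r (Θ' y 1) ∈ ⋀[k]^r V := by
    rw [GradedAlgebra.proj_apply]
    exact SetLike.coe_mem _
  calc GradedAlgebra.proj (fun i : ℕ => ⋀[k]^i V) r (Θ' (involute ↑x * y * ↑x⁻¹) 1)
      = GradedAlgebra.proj (fun i : ℕ => ⋀[k]^i V) r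
          (d • ExteriorAlgebra.map (d • ρx) (Θ' y 1)) := by
        rw [hσ, smul_mul_assoc, smul_mul_assoc, map_smul, LinearMap.smul_apply,
          apply_one_eq_changeForm hQ Θ' hΘ', apply_one_eq_changeForm hQ Θ' hΘ',
          changeForm_mul_mul_inv hQ hx hρ hd hσ]
    _ = (d * d ^ r) • ExteriorAlgebra.map ρx
          (GradedAlgebra.proj (fun i : ℕ => ⋀[k]^i V) r (Θ' y 1)) := by
        rw [map_smul, ExteriorAlgebra.proj_map, ExteriorAlgebra.map_smul_of_mem d ρx hmem,
          smul_smul]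
    _ = _ := by
        rw [zpow_sub_one₀ (left_ne_zero_of_mul_eq_one hd), inv_eq_of_mul_eq_one_right hd,
          zpow_natCast, mul_comm]

/-- For every `x ∈ Γ`, every `y ∈ C(V)`, and every `0 ≤ r ≤ 2g+1`, writing `θ_r(y)` for the
component of `θ(y)` in `⋀^r V`, one has
`θ_r(σ(x)·y·x⁻¹) = (det ρ(x))^{r−1} · (⋀^r ρ(x))(θ_r(y))`.
Here `θ : C(V) → ⋀*V` is the `C(V)`-module isomorphism `x ↦ x·1` for the `C(V)`-module
structure on `⋀*V` in which `v ∈ V` acts by `ω ↦ v ∧ ω + v ⌟ ω`. -/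
theorem stmt_5
    (k : Type*) [Field k] (h2 : (2 : k) ≠ 0)
    (g : ℕ) (hg : 1 ≤ g)
    (V : Type*) [AddCommGroup V] [Module k V]
    (ψ : LinearMap.BilinForm k V)
    (hsymm : ∀ v w : V, ψ v w = ψ w v)
    (hnd : ψ.Nondegenerate)
    (hdim : Module.finrank k V = 2 * g + 1) [FiniteDimensional k V]
    (Q : QuadraticForm k V) (hQ : ∀ v : V, Q v = ψ v v)
    -- the `C(V)`-module structure on `⋀*V`:
    (Θ' : CliffordAlgebra Q →ₐ[k] Module.End k (ExteriorAlgebra k V))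
    (hΘ' : ∀ (v : V) (ω : ExteriorAlgebra k V),
      Θ' (ι Q v) ω = ExteriorAlgebra.ι k v * ω + contractLeft (ψ v) ω)
    -- an element `x` of the Clifford group `Γ`, with `ρ(x)`:
    (x : (CliffordAlgebra Q)ˣ)
    (ρx : V →ₗ[k] V)
    (hρx : ∀ v : V, ι Q (ρx v) =
      involute (x : CliffordAlgebra Q) * ι Q v * (↑x⁻¹ : CliffordAlgebra Q)) :
    ∀ (y : CliffordAlgebra Q) (r : ℕ), r ≤ 2 * g + 1 →
      GradedAlgebra.proj (fun i : ℕ => ⋀[k]^i V) r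
          (Θ' (involute (x : CliffordAlgebra Q) * y * (↑x⁻¹ : CliffordAlgebra Q))
            (1 : ExteriorAlgebra k V)) =
        (LinearMap.det ρx) ^ ((r : ℤ) - 1) •
          ExteriorAlgebra.map ρx
            (GradedAlgebra.proj (fun i : ℕ => ⋀[k]^i V) r (Θ' y (1 : ExteriorAlgebra k V))) :=
  stmt_5_general k h2 g V ψ hsymm hnd hdim Q hQ Θ' hΘ' x ρx hρx
end

section
/- Let ω ∈ S be nonzero and define L(ω) = {v ∈ V : v·ω = 0 in S}. Then: (1) L(ω) ⊆ L(ω)^⊥ (the orthogonal complement with respect to ψ); in particular L(ω) is an isotropic subspace of V and dim_k L(ω) ≤ g. (2) If dim_k L(ω) = g, then L(ω) is a maximal isotropic subspace of V. (3) For every isotropic subspace L ≤ V of dimension g, there exists a nonzero element ω_L ∈ S, unique up to multiplication by k^×, such that L(ω_L) = L. -/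
open CliffordAlgebra Module

/-!
Since `v·w + w·v = polar Q v w = 2ψ(v, w)` in the Clifford algebra, two vectors killing a common
nonzero spinor are orthogonal, so `L(ω)` is isotropic, and isotropic subspaces of the
nondegenerate `(2g+1)`-dimensional `V` have dimension at most `g`.

For an isotropic `L` with basis `u₁, …, u_g`, the operators `u_i` anticommute and square to
zero, so applying them one after another to a nonzero spinor (skipping those that would give `0`)
produces a nonzero spinor killed by all of `L`. For uniqueness pick `w_j ∈ V` with
`polar Q (u_i) (w_j) = δ_ij`: then `w_i` maps the joint kernel of `u_j`, `j ∈ T ∪ {i}`,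
injectively into the joint kernel of `u_j`, `j ∈ T`, with image meeting the former trivially.
Each `u_i` therefore at least halves the dimension, and as `dim S = 2^g` the joint kernel of
`u₁, …, u_g` is a line.
-/

section AnticommutingOperators

variable {k S I : Type*} [Field k] [AddCommGroup S] [Module k S]

lemma apply_apply_eq_neg_of_anticomm {A B : Module.End k S} (h : A * B + B * A = 0) (x : S) :
    A (B x) = -B (A x) :=
  eq_neg_of_add_eq_zero_left (by simpa using LinearMap.congr_fun h x)

def jointKer (U : I → Module.End k S) (T : Finset I) : Submodule k S :=
  ⨅ i ∈ T, LinearMap.ker (U i)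

lemma mem_jointKer {U : I → Module.End k S} {T : Finset I} {x : S} :
    x ∈ jointKer U T ↔ ∀ i ∈ T, U i x = 0 := by
  simp [jointKer]

@[simp]
lemma jointKer_empty (U : I → Module.End k S) : jointKer U ∅ = ⊤ := by
  simp only [jointKer, Finset.notMem_empty, iInf_false, iInf_top]

lemma jointKer_ne_bot [Nontrivial S] (h2 : (2 : k) ≠ 0) {U : I → Module.End k S}
    (hU : ∀ i j, U i * U j + U j * U i = 0) (T : Finset I) : jointKer U T ≠ ⊥ := by
  classical
  induction T using Finset.induction_on with
  | empty => simp
  | insert i T _ ih =>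
    obtain ⟨s, hsT, hs⟩ := (Submodule.ne_bot_iff _).mp ih
    have hsq : U i * U i = 0 := by
      have : (2 : k) • (U i * U i) = 0 := by rw [two_smul]; exact hU i i
      exact (smul_eq_zero.mp this).resolve_left h2
    rw [Submodule.ne_bot_iff]
    by_cases hUs : U i s = 0
    · exact ⟨s, mem_jointKer.mpr <| by simpa [hUs] using mem_jointKer.mp hsT, hs⟩
    · refine ⟨U i s, mem_jointKer.mpr ?_, hUs⟩
      simp only [Finset.mem_insert, forall_eq_or_imp]
      refine ⟨by simpa using LinearMap.congr_fun hsq s, fun j hj => ?_⟩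
      rw [apply_apply_eq_neg_of_anticomm (hU j i), mem_jointKer.mp hsT j hj, map_zero, neg_zero]

variable [DecidableEq I] {U W : I → Module.End k S}

lemma two_mul_finrank_jointKer_insert_le [FiniteDimensional k S]
    (hUW : ∀ i j, U i * W j + W j * U i = if i = j then 1 else 0) {i : I} {T : Finset I}
    (hi : i ∉ T) :
    2 * finrank k (jointKer U (insert i T)) ≤ finrank k (jointKer U T) := by
  set K := jointKer U (insert i T)
  have hUWi : ∀ y, U i (W i y) + W i (U i y) = y := fun y => by
    simpa using LinearMap.congr_fun (hUW i i) y
  have hK : ∀ y ∈ K, U i y = 0 := fun y hy => mem_jointKer.mp hy i (Finset.mem_insert_self i T)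
  have hKT : K ≤ jointKer U T := fun y hy =>
    mem_jointKer.mpr fun j hj => mem_jointKer.mp hy j (Finset.mem_insert_of_mem hj)
  have hWK : K.map (W i) ≤ jointKer U T := by
    rintro _ ⟨y, hy, rfl⟩
    refine mem_jointKer.mpr fun j hj => ?_
    have hji : j ≠ i := by rintro rfl; exact hi hj
    have hanti : U j * W i + W i * U j = 0 := by simpa [hji] using hUW j i
    rw [apply_apply_eq_neg_of_anticomm hanti, mem_jointKer.mp (hKT hy) j hj, map_zero, neg_zero]
  have hinv : ∀ y ∈ K, U i (W i y) = y := fun y hy => by simpa [hK y hy] using hUWi y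
  have hinj : Function.Injective ((W i).domRestrict K) := fun y z hyz => by
    have := congrArg (U i) hyz
    simp only [LinearMap.domRestrict_apply] at this
    exact Subtype.ext (by rwa [hinv y y.2, hinv z z.2] at this)
  have hdisj : K ⊓ K.map (W i) = ⊥ := by
    refine eq_bot_iff.mpr ?_
    rintro _ ⟨hx, ⟨y, hy, rfl⟩⟩
    rw [Submodule.mem_bot, ← hinv y hy, hK _ hx, map_zero]
  have hmap : finrank k (K.map (W i)) = finrank k K := by
    rw [← LinearMap.range_domRestrict]; exact LinearMap.finrank_range_of_inj hinj
  have := Submodule.finrank_sup_add_finrank_inf_eq K (K.map (W i))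
  rw [hdisj, finrank_bot, hmap] at this
  have := Submodule.finrank_mono (sup_le hKT hWK)
  omega

lemma two_pow_card_mul_finrank_jointKer_le [FiniteDimensional k S]
    (hUW : ∀ i j, U i * W j + W j * U i = if i = j then 1 else 0) (T : Finset I) :
    2 ^ T.card * finrank k (jointKer U T) ≤ finrank k S := by
  induction T using Finset.induction_on with
  | empty => rw [jointKer_empty, finrank_top, Finset.card_empty, pow_zero, one_mul]
  | insert i T hi ih =>
    rw [Finset.card_insert_of_notMem hi, pow_succ, mul_assoc]
    exact (Nat.mul_le_mul_left _ (two_mul_finrank_jointKer_insert_le hUW hi)).trans ih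

lemma exists_smul_eq_of_forall_apply_eq_zero [Fintype I] [FiniteDimensional k S]
    (hUW : ∀ i j, U i * W j + W j * U i = if i = j then 1 else 0)
    (hS : finrank k S ≤ 2 ^ Fintype.card I) {s₀ s : S} (hs₀ : s₀ ≠ 0)
    (h₀ : ∀ i, U i s₀ = 0) (h : ∀ i, U i s = 0) : ∃ c : k, s = c • s₀ := by
  have hK := (two_pow_card_mul_finrank_jointKer_le hUW Finset.univ).trans hS
  rw [Finset.card_univ] at hK
  have hK1 : finrank k (jointKer U Finset.univ) = 1 := by
    refine le_antisymm (by simpa using hK) (Nat.one_le_iff_ne_zero.mpr ?_)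
    exact finrank_pos_iff_exists_ne_zero.mpr ⟨⟨s₀, mem_jointKer.mpr fun i _ => h₀ i⟩,
      fun h => hs₀ (congrArg Subtype.val h)⟩ |>.ne'
  obtain ⟨c, hc⟩ := exists_smul_eq_of_finrank_eq_one hK1
    (x := ⟨s₀, mem_jointKer.mpr fun i _ => h₀ i⟩) (fun h => hs₀ (congrArg Subtype.val h))
    ⟨s, mem_jointKer.mpr fun i _ => h i⟩
  exact ⟨c, (congrArg Subtype.val hc).symm⟩

end AnticommutingOperators

lemma Submodule.le_of_basis_mem {k V I : Type*} [Field k] [AddCommGroup V] [Module k V]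
    {L N : Submodule k V} (b : Basis I k L) (h : ∀ i, (b i : V) ∈ N) : L ≤ N :=
  calc L = (Submodule.span k (Set.range b)).map L.subtype := by
        rw [b.span_eq, Submodule.map_subtype_top]
    _ ≤ N := by
        rw [Submodule.map_span, Submodule.span_le]
        rintro _ ⟨_, ⟨i, rfl⟩, rfl⟩
        exact h i

lemma LinearMap.BilinForm.exists_apply_basis_eq_ite {k V I : Type*} [Field k] [AddCommGroup V]
    [Module k V] [FiniteDimensional k V] [DecidableEq I] {B : LinearMap.BilinForm k V}
    (hB : B.Nondegenerate) {L : Submodule k V} (b : Basis I k L) :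
    ∃ w : I → V, ∀ i j, B (w i) (b j) = if i = j then 1 else 0 :=
  ⟨fun i => (B.toDual hB).symm (Subspace.dualLift L (b.coord i)), fun i j => by
    simp [Subspace.dualLift_of_subtype, Finsupp.single_apply, eq_comm]⟩

lemma LinearMap.BilinForm.two_mul_finrank_le_of_isotropic {k V : Type*} [Field k]
    [AddCommGroup V] [Module k V] [FiniteDimensional k V] {B : LinearMap.BilinForm k V}
    (hB : B.Nondegenerate) {N : Submodule k V} (hN : ∀ v ∈ N, ∀ w ∈ N, B v w = 0) :
    2 * finrank k N ≤ finrank k V := by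
  have hle : N ≤ B.orthogonal N := fun x hx =>
    (B.mem_orthogonal_iff).mpr fun y hy => hN y hy x hx
  have := Submodule.finrank_mono hle
  rw [B.finrank_orthogonal hB] at this
  have := Submodule.finrank_le N
  omega

lemma QuadraticMap.polarBilin_eq_two_smul {k V : Type*} [Field k] [AddCommGroup V] [Module k V]
    {Q : QuadraticForm k V} {ψ : LinearMap.BilinForm k V} (hQ : ∀ v, Q v = ψ v v)
    (hψ : LinearMap.flip ψ = ψ) : polarBilin Q = (2 : k) • ψ := by
  obtain rfl : Q = ψ.toQuadraticMap := QuadraticMap.ext hQ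
  rw [LinearMap.BilinMap.polarBilin_toQuadraticMap, hψ, two_smul]

section Antidiagonal

variable {k V : Type*} [Field k] [AddCommGroup V] [Module k V] {n : ℕ}
  {ψ : LinearMap.BilinForm k V} {p : Basis (Fin (n + 1)) k V}

lemma apply_basis_rev_eq_repr
    (hψp : ∀ i j : Fin (n + 1), ψ (p i) (p j) = if (i : ℕ) + j = n then 1 else 0)
    (x : V) (i : Fin (n + 1)) : ψ x (p i.rev) = p.repr x i := by
  have : LinearMap.flip ψ (p i.rev) = p.coord i := p.ext fun j => by
    simp only [LinearMap.flip_apply, hψp, Fin.val_rev, Basis.coord_apply, Basis.repr_self,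
      Finsupp.single_apply, Fin.ext_iff]
    exact if_congr (by omega) rfl rfl
  exact LinearMap.congr_fun this x

lemma flip_eq_self_of_antidiagonal
    (hψp : ∀ i j : Fin (n + 1), ψ (p i) (p j) = if (i : ℕ) + j = n then 1 else 0) :
    LinearMap.flip ψ = ψ :=
  p.ext fun i => p.ext fun j => by simp only [LinearMap.flip_apply, hψp, add_comm]

lemma separatingLeft_of_antidiagonal
    (hψp : ∀ i j : Fin (n + 1), ψ (p i) (p j) = if (i : ℕ) + j = n then 1 else 0) :
    ψ.SeparatingLeft := fun x hx =>
  p.repr.injective <| Finsupp.ext fun i => by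
    rw [← apply_basis_rev_eq_repr hψp, hx, map_zero, Finsupp.coe_zero, Pi.zero_apply]

lemma nondegenerate_polarBilin_of_antidiagonal (h2 : (2 : k) ≠ 0) {Q : QuadraticForm k V}
    (hQ : ∀ v, Q v = ψ v v)
    (hψp : ∀ i j : Fin (n + 1), ψ (p i) (p j) = if (i : ℕ) + j = n then 1 else 0) :
    (QuadraticMap.polarBilin Q).Nondegenerate := by
  have hpolar := QuadraticMap.polarBilin_eq_two_smul hQ (flip_eq_self_of_antidiagonal hψp)
  have hsep : (QuadraticMap.polarBilin Q).SeparatingLeft := fun x hx =>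
    separatingLeft_of_antidiagonal hψp x fun y => by simpa [hpolar, h2] using hx y
  refine ⟨hsep, fun y hy => hsep y fun x => ?_⟩
  rw [QuadraticMap.polarBilin_apply_apply, QuadraticMap.polar_comm,
    ← QuadraticMap.polarBilin_apply_apply, hy]

end Antidiagonal

section Clifford

open QuadraticMap

variable {k V M : Type*} [Field k] [AddCommGroup V] [Module k V] [AddCommGroup M] [Module k M]
  {Q : QuadraticForm k V}

lemma AlgHom.map_ι_mul_map_ι_add_swap {A : Type*} [Ring A] [Algebra k A]
    (Θ : CliffordAlgebra Q →ₐ[k] A) (v w : V) :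
    Θ (ι Q v) * Θ (ι Q w) + Θ (ι Q w) * Θ (ι Q v) = algebraMap k A (polar Q v w) := by
  rw [← map_mul Θ, ← map_mul Θ, ← map_add Θ, ι_mul_ι_add_swap, AlgHom.commutes]

def cliffordAnnihilator (Θ : CliffordAlgebra Q →ₐ[k] Module.End k M) (ω : M) :
    Submodule k V :=
  LinearMap.ker (LinearMap.applyₗ ω ∘ₗ Θ.toLinearMap ∘ₗ ι Q)

variable {Θ : CliffordAlgebra Q →ₐ[k] Module.End k M}

lemma mem_cliffordAnnihilator {ω : M} {v : V} :
    v ∈ cliffordAnnihilator Θ ω ↔ Θ (ι Q v) ω = 0 :=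
  Iff.rfl

lemma polar_eq_zero_of_mem_cliffordAnnihilator {ω : M} (hω : ω ≠ 0) {v w : V}
    (hv : v ∈ cliffordAnnihilator Θ ω) (hw : w ∈ cliffordAnnihilator Θ ω) :
    polar Q v w = 0 := by
  have := LinearMap.congr_fun (Θ.map_ι_mul_map_ι_add_swap v w) ω
  rw [mem_cliffordAnnihilator] at hv hw
  simp only [LinearMap.add_apply, Module.End.mul_apply, hv, hw, map_zero, add_zero,
    Module.algebraMap_end_apply] at this
  exact (smul_eq_zero.mp this.symm).resolve_right hω

lemma exists_le_cliffordAnnihilator [Nontrivial M] (h2 : (2 : k) ≠ 0) {L : Submodule k V}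
    [FiniteDimensional k L] (hL : ∀ v ∈ L, ∀ w ∈ L, polar Q v w = 0) :
    ∃ ω ≠ 0, L ≤ cliffordAnnihilator Θ ω := by
  set b := finBasis k L
  have hU : ∀ i j, Θ (ι Q (b i)) * Θ (ι Q (b j)) + Θ (ι Q (b j)) * Θ (ι Q (b i)) = 0 :=
    fun i j => by rw [Θ.map_ι_mul_map_ι_add_swap, hL _ (b i).2 _ (b j).2, map_zero]
  obtain ⟨ω, hωL, hω⟩ := (Submodule.ne_bot_iff _).mp (jointKer_ne_bot h2 hU Finset.univ)
  exact ⟨ω, hω, Submodule.le_of_basis_mem b fun i =>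
    mem_jointKer.mp hωL i (Finset.mem_univ i)⟩

lemma exists_smul_eq_of_le_cliffordAnnihilator [FiniteDimensional k V] [FiniteDimensional k M]
    (hQ : (polarBilin Q).Nondegenerate) {L : Submodule k V} (hM : finrank k M ≤ 2 ^ finrank k L)
    {ω ω' : M} (hω : ω ≠ 0) (hωL : L ≤ cliffordAnnihilator Θ ω)
    (hω'L : L ≤ cliffordAnnihilator Θ ω') : ∃ c : k, ω' = c • ω := by
  set b := finBasis k L
  obtain ⟨w, hw⟩ := LinearMap.BilinForm.exists_apply_basis_eq_ite hQ b
  have hUW : ∀ i j, Θ (ι Q (b i)) * Θ (ι Q (w j)) + Θ (ι Q (w j)) * Θ (ι Q (b i)) =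
      if i = j then 1 else 0 := fun i j => by
    rw [Θ.map_ι_mul_map_ι_add_swap, polar_comm, ← polarBilin_apply_apply, hw,
      apply_ite (algebraMap k (Module.End k M)), map_one, map_zero]
    exact if_congr eq_comm rfl rfl
  exact exists_smul_eq_of_forall_apply_eq_zero hUW (by simpa using hM) hω
    (fun i => hωL (b i).2) (fun i => hω'L (b i).2)

end Clifford

/-- For nonzero `ω ∈ S`, let `L(ω) = {v ∈ V : v·ω = 0}`.  Then:
(1) `L(ω) ⊆ L(ω)^⊥`; in particular `L(ω)` is isotropic and `dim L(ω) ≤ g`;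
(2) if `dim L(ω) = g` then `L(ω)` is a maximal isotropic subspace of `V`;
(3) every `g`-dimensional isotropic subspace `L ≤ V` is `L(ω_L)` for some nonzero `ω_L ∈ S`,
unique up to `k^×`-multiple. -/
theorem stmt_10
    (k : Type*) [Field k] (h2 : (2 : k) ≠ 0)
    (g : ℕ)
    (V : Type*) [AddCommGroup V] [Module k V]
    (ψ : LinearMap.BilinForm k V)
    (p : Module.Basis (Fin (2 * g + 1)) k V)
    (hψp : ∀ i j : Fin (2 * g + 1), ψ (p i) (p j) = if (i : ℕ) + (j : ℕ) = 2 * g then 1 else 0)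
    (Q : QuadraticForm k V) (hQ : ∀ v : V, Q v = ψ v v)
    -- the spin representation `S = ⋀*E`, modelled on `⋀*(Fin g → k)` with `e_j ↔ p_{g+1+j}`:
    (Θ : CliffordAlgebra Q →ₐ[k] Module.End k (ExteriorAlgebra k (Fin g → k))) :
    -- (1) and (2):
    (∀ ω : ExteriorAlgebra k (Fin g → k), ω ≠ 0 →
      ∀ Lω : Submodule k V, (∀ v : V, v ∈ Lω ↔ Θ (ι Q v) ω = 0) →
        ((∀ v ∈ Lω, ∀ w ∈ Lω, ψ v w = 0) ∧ Module.finrank k Lω ≤ g) ∧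
        (Module.finrank k Lω = g →
          ∀ L' : Submodule k V, Lω ≤ L' → (∀ v ∈ L', ∀ w ∈ L', ψ v w = 0) → L' = Lω)) ∧
    -- (3):
    (∀ L : Submodule k V, (∀ v ∈ L, ∀ w ∈ L, ψ v w = 0) → Module.finrank k L = g →
      ∃ ω : ExteriorAlgebra k (Fin g → k), ω ≠ 0 ∧
        (∀ v : V, v ∈ L ↔ Θ (ι Q v) ω = 0) ∧
        ∀ ω' : ExteriorAlgebra k (Fin g → k), ω' ≠ 0 →
          (∀ v : V, v ∈ L ↔ Θ (ι Q v) ω' = 0) →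
          ∃ c : k, c ≠ 0 ∧ ω' = c • ω) := by
  have : FiniteDimensional k V := .of_basis p
  have : FiniteDimensional k (ExteriorAlgebra k (Fin g → k)) :=
    .of_basis (Pi.basisFun k (Fin g)).ExteriorAlgebra
  have hQnd := nondegenerate_polarBilin_of_antidiagonal h2 hQ hψp
  have hiso : ∀ N : Submodule k V, (∀ v ∈ N, ∀ w ∈ N, ψ v w = 0) ↔
      ∀ v ∈ N, ∀ w ∈ N, QuadraticMap.polar Q v w = 0 := by
    simp [← QuadraticMap.polarBilin_apply_apply, h2,
      QuadraticMap.polarBilin_eq_two_smul hQ (flip_eq_self_of_antidiagonal hψp)]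
  have hfinrank : ∀ N : Submodule k V, (∀ v ∈ N, ∀ w ∈ N, ψ v w = 0) → finrank k N ≤ g :=
    fun N hN => by
      have := LinearMap.BilinForm.two_mul_finrank_le_of_isotropic hQnd ((hiso N).mp hN)
      rw [finrank_eq_card_basis p, Fintype.card_fin] at this
      omega
  have hann : ∀ ω ≠ 0,
      ∀ v ∈ cliffordAnnihilator Θ ω, ∀ w ∈ cliffordAnnihilator Θ ω, ψ v w = 0 := fun ω hω =>
    (hiso _).mpr fun v hv w hw => polar_eq_zero_of_mem_cliffordAnnihilator hω hv hw
  refine ⟨fun ω hω Lω hLω => ?_, fun L hL hLg => ?_⟩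
  · obtain rfl : Lω = cliffordAnnihilator Θ ω := SetLike.ext hLω
    exact ⟨⟨hann ω hω, hfinrank _ (hann ω hω)⟩, fun hg L' hle hL' =>
      (Submodule.eq_of_le_of_finrank_le hle ((hfinrank L' hL').trans hg.ge)).symm⟩
  · obtain ⟨ω, hω, hLω⟩ := exists_le_cliffordAnnihilator (Θ := Θ) h2 ((hiso L).mp hL)
    have hLeq : L = cliffordAnnihilator Θ ω :=
      Submodule.eq_of_le_of_finrank_le hLω ((hfinrank _ (hann ω hω)).trans hLg.ge)
    refine ⟨ω, hω, SetLike.ext_iff.mp hLeq, fun ω' hω' hL' => ?_⟩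
    have hS : finrank k (ExteriorAlgebra k (Fin g → k)) ≤ 2 ^ finrank k L := by
      simp [finrank_eq_card_basis (Pi.basisFun k (Fin g)).ExteriorAlgebra, hLg]
    obtain ⟨c, rfl⟩ := exists_smul_eq_of_le_cliffordAnnihilator hQnd hS hω hLω
      fun v hv => (hL' v).mp hv
    exact ⟨c, by rintro rfl; simp at hω', rfl⟩
end

section
/- Let a, b, n, r be integers satisfying n ≥ 1, a ≥ n, b ≥ n, and 1 ≤ r ≤ n. Let J be a totally ordered finite set with a partition J = J₁ ⊔ J₂ such that |J₁| = a and |J₂| = b. Then there exists a family ℱ of r-element subsets of J with |ℱ| = C(n, r) (binomial coefficient) with the following two properties: (1) every I ∈ ℱ satisfies |I ∩ J₁| = ⌊r/2⌋; (2) for every field K, every n-dimensional K-vector space W, and every family of vectors (w_i)_{i ∈ J} in W such that for every subset T ⊆ J with |T| = n the family (w_i)_{i ∈ T} is a basis of W, the family (w_I)_{I ∈ ℱ} is a basis of ⋀^r W, where for I = {i₁ < ⋯ < i_r} one sets w_I = w_{i₁} ∧ ⋯ ∧ w_{i_r}. -/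
/-!
Fix letters `a_p ∈ J₁` and `b_p ∈ J₂` for `p < n`. An `r`-subset `S` of `{0, …, n-1}` gives the
`r`-set `I(S)` that takes `b_p` or `a_p` at `p ∈ S` according as the rank of `p` in `S` is even
or odd (so that `⌊r/2⌋` of its letters lie in `J₁`), and the `(n-r)`-set `D(S)` that takes the
other letter at each `p ∉ S`. Since `I(S) ∪ D(S)` has `n` elements, `w_{I(S)} ∧ w_{D(S)} ≠ 0`.
If `w_{I(S)} ∧ w_{D(S₀)} ≠ 0`, then every `p ∈ S \ S₀` has ranks of the same parity in `S` and
in `S₀`; this forces `S` to lie below `S₀` (every `y` has at least as many elements of `S` as of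
`S₀` below it), strictly if `S ≠ S₀`. So the pairing with the `w_{D(S₀)}` is triangular, the
`C(n, r)` products `w_{I(S)}` are linearly independent, and they span since
`dim ⋀^r W = C(n, r)`.
-/

universe u v

open Finset Module

def countBelow (S : Finset ℕ) (p : ℕ) : ℕ := #{q ∈ S | q < p}

lemma countBelow_succ (S : Finset ℕ) (y : ℕ) :
    countBelow S (y + 1) = countBelow S y + if y ∈ S then 1 else 0 := by
  simp only [countBelow, Nat.lt_succ_iff_lt_or_eq, filter_or, filter_eq']
  split_ifs
  · rw [card_union_of_disjoint (disjoint_singleton_right.2 (by simp)), card_singleton]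
  · simp

lemma countBelow_eq_card {S : Finset ℕ} {y : ℕ} (h : ∀ q ∈ S, q < y) : countBelow S y = #S := by
  rw [countBelow, filter_true_of_mem h]

lemma countBelow_le_of_parity {S T : Finset ℕ} (hcard : #S = #T)
    (hpar : ∀ p ∈ T, p ∉ S → countBelow T p % 2 = countBelow S p % 2) (y : ℕ) :
    countBelow S y ≤ countBelow T y := by
  by_contra! hy
  -- Once `T` falls behind `S` it can never catch up: at an element of `T \ S` the
  -- parity condition forces a gap of at least two.
  have step : ∀ z, countBelow T z < countBelow S z →
      countBelow T (z + 1) < countBelow S (z + 1) := by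
    intro z hz
    rw [countBelow_succ, countBelow_succ]
    by_cases hzT : z ∈ T <;> by_cases hzS : z ∈ S <;> simp only [hzT, hzS, if_true, if_false]
    · omega
    · have := hpar z hzT hzS
      omega
    · omega
    · omega
  obtain ⟨N, hN⟩ := exists_nat_subset_range (S ∪ T)
  have gap : ∀ z, y ≤ z → countBelow T z < countBelow S z := fun z hz => by
    induction z, hz using Nat.le_induction with
    | base => exact hy
    | succ z _ ih => exact step z ih
  have hbound : ∀ q ∈ S ∪ T, q < max y N := fun q hq =>
    lt_max_of_lt_right (mem_range.1 (hN hq))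
  have := gap _ (le_max_left y N)
  rw [countBelow_eq_card fun q hq => hbound q (mem_union_left T hq),
    countBelow_eq_card fun q hq => hbound q (mem_union_right S hq)] at this
  omega

lemma sum_countBelow_lt {N : ℕ} {S T : Finset ℕ} (hS : S ⊆ range N) (hcard : #S = #T)
    (hne : S ≠ T) (hle : ∀ y, countBelow S y ≤ countBelow T y) :
    ∑ y ∈ range N, countBelow S y < ∑ y ∈ range N, countBelow T y := by
  obtain ⟨p, hpS, hpT⟩ : ∃ p ∈ S, p ∉ T := not_subset.1 fun h =>
    hne (eq_of_subset_of_card_le h hcard.ge)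
  refine sum_lt_sum (fun y _ => hle y) ⟨p, hS hpS, ?_⟩
  have := hle (p + 1)
  rw [countBelow_succ, countBelow_succ, if_pos hpS, if_neg hpT] at this
  omega

lemma card_filter_countBelow_odd (S : Finset ℕ) :
    #{p ∈ S | countBelow S p % 2 = 1} = #S / 2 := by
  induction S using Finset.induction_on_max with
  | empty => simp
  | insert m S hm ih =>
    have hbelow : ∀ p ∈ S, countBelow (insert m S) p = countBelow S p := fun p hp => by
      simp only [countBelow, filter_insert, if_neg (hm p hp).not_gt]
    have htop : countBelow (insert m S) m = #S := by
      rw [countBelow, filter_insert, if_neg (lt_irrefl m), filter_true_of_mem hm]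
    have hmS : m ∉ S := fun h => lt_irrefl m (hm m h)
    rw [filter_insert, htop, filter_congr fun p hp => by rw [hbelow p hp],
      card_insert_of_notMem hmS]
    split_ifs with hodd
    · rw [card_insert_of_notMem (fun h => hmS (mem_filter.1 h).1)]
      omega
    · omega

section Letters

variable {J : Type*} [DecidableEq J] (c : Bool → ℕ → J) {n : ℕ}

/- `c true p` and `c false p` are the two letters `a_p ∈ J₁`, `b_p ∈ J₂` available at position `p`;
`letter c S p` is the one chosen by `S` (`a_p` iff `p` has odd rank in `S`), `coletter c S p` the
other one, and `letterSet c S`, `coletterSet c n S` are the sets `I(S)`, `D(S)`. -/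
def letter (S : Finset ℕ) (p : ℕ) : J := c (decide (countBelow S p % 2 = 1)) p

def coletter (S : Finset ℕ) (p : ℕ) : J := c (decide (countBelow S p % 2 = 0)) p

def letterSet (S : Finset ℕ) : Finset J := S.image (letter c S)

def coletterSet (n : ℕ) (S : Finset ℕ) : Finset J := (range n \ S).image (coletter c S)

variable {c}

lemma not_disjoint_letterSet_coletterSet {S S₀ : Finset ℕ} (hS : S ⊆ range n) {p : ℕ}
    (hpS : p ∈ S) (hpS₀ : p ∉ S₀) (hpar : countBelow S p % 2 ≠ countBelow S₀ p % 2) :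
    ¬Disjoint (letterSet c S) (coletterSet c n S₀) := by
  refine not_disjoint_iff.2 ⟨letter c S p, mem_image_of_mem _ hpS, mem_image.2
    ⟨p, mem_sdiff.2 ⟨hS hpS, hpS₀⟩, ?_⟩⟩
  have : countBelow S₀ p % 2 = 0 ↔ countBelow S p % 2 = 1 := by omega
  simp only [coletter, letter, this]

variable (hc : ∀ β γ, ∀ p < n, ∀ q < n, c β p = c γ q → p = q)
include hc

section

variable {S : Finset ℕ} (hS : S ⊆ range n)
include hS

lemma card_letterSet : #(letterSet c S) = #S :=
  card_image_of_injOn fun p hp q hq =>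
    hc _ _ p (mem_range.1 (hS hp)) q (mem_range.1 (hS hq))

lemma card_coletterSet : #(coletterSet c n S) = n - #S := by
  rw [coletterSet, card_image_of_injOn, card_sdiff_of_subset hS, card_range]
  intro p hp q hq
  exact hc _ _ p (mem_range.1 (mem_sdiff.1 hp).1) q (mem_range.1 (mem_sdiff.1 hq).1)

lemma disjoint_letterSet_coletterSet : Disjoint (letterSet c S) (coletterSet c n S) := by
  simp only [letterSet, coletterSet, disjoint_left, mem_image, mem_sdiff, mem_range]
  rintro _ ⟨p, hp, rfl⟩ ⟨q, ⟨hqn, hqS⟩, h⟩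
  exact hqS (hc _ _ q hqn p (mem_range.1 (hS hp)) h ▸ hp)

lemma mem_iff_exists_mem_letterSet {p : ℕ} (hp : p < n) :
    p ∈ S ↔ ∃ β, c β p ∈ letterSet c S := by
  refine ⟨fun h => ⟨_, mem_image_of_mem _ h⟩, ?_⟩
  rintro ⟨β, hβ⟩
  obtain ⟨q, hq, h⟩ := mem_image.1 hβ
  exact hc _ _ q (mem_range.1 (hS hq)) p hp h ▸ hq

lemma card_letterSet_inter {J₁ : Finset J} (hJ₁ : ∀ β, ∀ p < n, c β p ∈ J₁ ↔ β = true) :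
    #(letterSet c S ∩ J₁) = #{p ∈ S | countBelow S p % 2 = 1} := by
  have : letterSet c S ∩ J₁ = {p ∈ S | countBelow S p % 2 = 1}.image (letter c S) := by
    ext x
    simp only [letterSet, letter, mem_inter, mem_image, mem_filter]
    constructor
    · rintro ⟨⟨p, hp, rfl⟩, hx⟩
      exact ⟨p, ⟨hp, by simpa using (hJ₁ _ p (mem_range.1 (hS hp))).1 hx⟩, rfl⟩
    · rintro ⟨p, ⟨hp, hodd⟩, rfl⟩
      exact ⟨⟨p, hp, rfl⟩, (hJ₁ _ p (mem_range.1 (hS hp))).2 (by simpa using hodd)⟩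
  rw [this, card_image_of_injOn]
  intro p hp q hq
  exact hc _ _ p (mem_range.1 (hS (mem_filter.1 hp).1)) q (mem_range.1 (hS (mem_filter.1 hq).1))

end

lemma letterSet_injOn : Set.InjOn (letterSet c) {S | S ⊆ range n} := fun S hS T hT h => by
  ext p
  by_cases hp : p < n
  · rw [mem_iff_exists_mem_letterSet hc hS hp, mem_iff_exists_mem_letterSet hc hT hp, h]
  · exact iff_of_false (fun h => hp (mem_range.1 (hS h))) (fun h => hp (mem_range.1 (hT h)))

end Letters

theorem LinearIndependent.of_triangular {ι R M N α : Type*} [Fintype ι] [LinearOrder α]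
    [Ring R] [IsDomain R] [AddCommGroup M] [Module R M] [AddCommGroup N] [Module R N]
    [Module.IsTorsionFree R N]
    {v : ι → M} (f : ι → M →ₗ[R] N) (φ : ι → α) (hdiag : ∀ i, f i (v i) ≠ 0)
    (hoff : ∀ i j, j ≠ i → φ j ≤ φ i → f i (v j) = 0) : LinearIndependent R v := by
  classical
  rw [Fintype.linearIndependent_iff]
  intro g hg
  by_contra! hsupp
  obtain ⟨i, hi, hmax⟩ := exists_max_image {j | g j ≠ 0} φ
    (let ⟨j, hj⟩ := hsupp; ⟨j, mem_filter.2 ⟨mem_univ j, hj⟩⟩)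
  have hsum : ∑ j, g j • f i (v j) = g i • f i (v i) := by
    refine sum_eq_single i (fun j _ hji => ?_) (fun h => (h (mem_univ i)).elim)
    by_cases hj : g j = 0
    · rw [hj, zero_smul]
    · rw [hoff i j hji (hmax j (mem_filter.2 ⟨mem_univ j, hj⟩)), smul_zero]
  have h0 := congrArg (f i) hg
  simp only [map_sum, map_smul, map_zero, hsum] at h0
  exact (smul_eq_zero.1 h0).elim (mem_filter.1 hi).2 (hdiag i)

section Exterior

variable {K W J : Type*} [Field K] [AddCommGroup W] [Module K W] [LinearOrder J]

lemma ExteriorAlgebra.ιMulti_ne_zero_of_linearIndependent {k : ℕ} {v : Fin k → W}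
    (hv : LinearIndependent K v) : ιMulti K k v ≠ 0 := by
  have hid : (id : Fin k → Fin k) = univ.orderEmbOfFin (card_fin k) :=
    orderEmbOfFin_unique _ (fun _ => mem_univ _) strictMono_id
  have := (exteriorPower.ιMulti_family_linearIndependent_field (n := k) hv).ne_zero
    (Set.powersetCard.ofCard (card_fin k))
  rw [ne_eq, ← Submodule.coe_eq_zero, exteriorPower.ιMulti_family_apply_coe] at this
  convert this
  exact congrArg (v ∘ ·) hid

lemma ExteriorAlgebra.ιMulti_family_ne_zero {k : ℕ} (w : J → W)
    (s : Set.powersetCard J k) (hs : LinearIndependent K fun t : (s : Finset J) => w t) :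
    ιMulti_family K k w s ≠ 0 :=
  ιMulti_ne_zero_of_linearIndependent <| hs.comp
    (fun i => ⟨_, orderEmbOfFin_mem s.1 s.2 i⟩) fun _ _ h => by simpa using h

lemma span_eq_exteriorPower_of_linearIndependent [FiniteDimensional K W] {ι : Type*} [Fintype ι]
    {r : ℕ} {v : ι → ExteriorAlgebra K W} (hv : ∀ i, v i ∈ ⋀[K]^r W)
    (hli : LinearIndependent K v) (hcard : Fintype.card ι = (finrank K W).choose r) :
    Submodule.span K (Set.range v) = ⋀[K]^r W := by
  let v' : ι → ⋀[K]^r W := fun i => ⟨v i, hv i⟩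
  have hli' : LinearIndependent K v' := LinearIndependent.of_comp (⋀[K]^r W).subtype hli
  have htop :=
    hli'.span_eq_top_of_card_eq_finrank' (hcard.trans (exteriorPower.finrank_eq K r).symm)
  have := congrArg (Submodule.map (⋀[K]^r W).subtype) htop
  rwa [Submodule.map_span, Submodule.map_top, Submodule.range_subtype, ← Set.range_comp] at this

theorem linearIndependent_ιMulti_family_letterSet {c : Bool → ℕ → J} {n r : ℕ}
    (hc : ∀ β γ, ∀ p < n, ∀ q < n, c β p = c γ q → p = q) (w : J → W)
    (hw : ∀ T : Finset J, #T = n → LinearIndependent K fun t : T => w t) :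
    LinearIndependent K fun S : powersetCard r (range n) =>
      ExteriorAlgebra.ιMulti_family K r w <| Set.powersetCard.ofCard <|
        (card_letterSet hc (mem_powersetCard.1 S.2).1).trans (mem_powersetCard.1 S.2).2 := by
  have hsub (S : powersetCard r (range n)) := mem_powersetCard.1 S.2
  let co (S : powersetCard r (range n)) : Set.powersetCard J (n - r) :=
    Set.powersetCard.ofCard ((card_coletterSet hc (hsub S).1).trans (by rw [(hsub S).2]))
  refine LinearIndependent.of_triangular
    (fun S => LinearMap.mulRight K (ExteriorAlgebra.ιMulti_family K (n - r) w (co S)))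
    (fun S => ∑ y ∈ range n, countBelow S.1 y) (fun S => ?_) (fun S₀ S hne hle => ?_)
  · have hdisj := disjoint_letterSet_coletterSet hc (hsub S).1
    have hrn : r ≤ n := by simpa [(hsub S).2] using card_le_card (hsub S).1
    rw [LinearMap.mulRight_apply, ExteriorAlgebra.ιMulti_family_mul_of_disjoint _ _ _ _ hdisj,
      smul_ne_zero_iff_ne]
    exact ExteriorAlgebra.ιMulti_family_ne_zero _ _
      (hw _ ((Set.powersetCard.card_eq _).trans (by omega)))
  · refine ExteriorAlgebra.ιMulti_family_mul_of_not_disjoint _ _ _ _ fun hdisj => ?_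
    have hpar (p) (hp : p ∈ S.1) (hp₀ : p ∉ S₀.1) :
        countBelow S.1 p % 2 = countBelow S₀.1 p % 2 :=
      by_contra fun h => not_disjoint_letterSet_coletterSet (hsub S).1 hp hp₀ h hdisj
    have hcard : #S₀.1 = #S.1 := (hsub S₀).2.trans (hsub S).2.symm
    exact (sum_countBelow_lt (hsub S₀).1 hcard (fun h => hne (Subtype.ext h).symm)
      (countBelow_le_of_parity hcard hpar)).not_ge hle

end Exterior

lemma exists_letters_of_le_card {J : Type*} [Fintype J] [DecidableEq J] (J₁ : Finset J) {n : ℕ}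
    (hn : 1 ≤ n) (ha : n ≤ #J₁) (hb : n ≤ #J₁ᶜ) :
    ∃ c : Bool → ℕ → J, (∀ β γ, ∀ p < n, ∀ q < n, c β p = c γ q → p = q) ∧
      ∀ β, ∀ p < n, c β p ∈ J₁ ↔ β = true := by
  have : NeZero n := ⟨by omega⟩
  obtain ⟨ea⟩ : Nonempty (Fin n ↪ J₁) :=
    Function.Embedding.nonempty_of_card_le (by rwa [Fintype.card_fin, Fintype.card_coe])
  obtain ⟨eb⟩ : Nonempty (Fin n ↪ (J₁ᶜ : Finset J)) :=
    Function.Embedding.nonempty_of_card_le (by rwa [Fintype.card_fin, Fintype.card_coe])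
  refine ⟨fun β p => if β then ea (Fin.ofNat n p) else eb (Fin.ofNat n p), ?_, ?_⟩
  · have hval : ∀ p < n, ∀ q < n, Fin.ofNat n p = Fin.ofNat n q → p = q := fun p hp q hq h => by
      simpa [Fin.ext_iff, Nat.mod_eq_of_lt hp, Nat.mod_eq_of_lt hq] using h
    rintro (_ | _) (_ | _) p hp q hq h <;>
      simp only [Bool.false_eq_true, if_false, if_true] at h
    · exact hval p hp q hq (eb.injective (Subtype.ext h))
    · exact (mem_compl.1 (h ▸ (eb _).2) (ea _).2).elim
    · exact (mem_compl.1 (eb _).2 (h ▸ (ea _).2)).elim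
    · exact hval p hp q hq (ea.injective (Subtype.ext h))
  · rintro (_ | _) p - <;> simp [mem_compl.1 (eb _).2, (ea _).2]

theorem stmt_18_general
    (a b n r : ℕ) (hn : 1 ≤ n) (ha : n ≤ a) (hb : n ≤ b)
    (J : Type u) [Fintype J] [LinearOrder J]
    (J₁ : Finset J) (hJ₁ : J₁.card = a) (hJ₂ : J₁ᶜ.card = b) :
    ∃ ℱ : Finset (Finset J), ∃ hcard : ∀ I ∈ ℱ, I.card = r,
      ℱ.card = n.choose r ∧
      (∀ I ∈ ℱ, (I ∩ J₁).card = r / 2) ∧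
      (∀ (K : Type v) [Field K] (W : Type v) [AddCommGroup W], ∀ [Module K W],
        FiniteDimensional K W → Module.finrank K W = n →
        ∀ w : J → W,
        (∀ T : Finset J, T.card = n →
          (LinearIndependent K fun t : T => w t) ∧
            Submodule.span K (w '' ↑T) = ⊤) →
        (LinearIndependent K fun I : ℱ =>
          ExteriorAlgebra.ιMulti K r
            (fun t : Fin r => w ((I.1.orderIsoOfFin (hcard I.1 I.2) t : J)))) ∧
        Submodule.span K (Set.range fun I : ℱ =>
            ExteriorAlgebra.ιMulti K r
              (fun t : Fin r => w ((I.1.orderIsoOfFin (hcard I.1 I.2) t : J)))) =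
          ⋀[K]^r W) := by
  obtain ⟨c, hc, hcJ₁⟩ := exists_letters_of_le_card J₁ hn (hJ₁ ▸ ha) (hJ₂ ▸ hb)
  have hsub {S} (hS : S ∈ powersetCard r (range n)) := mem_powersetCard.1 hS
  have hcard : ∀ I ∈ (powersetCard r (range n)).image (letterSet c), #I = r := by
    simp only [mem_image]
    rintro _ ⟨S, hS, rfl⟩
    exact (card_letterSet hc (hsub hS).1).trans (hsub hS).2
  have hinj : Set.InjOn (letterSet c) (powersetCard r (range n)) :=
    (letterSet_injOn hc).mono fun S hS => (hsub hS).1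
  have hℱ : #((powersetCard r (range n)).image (letterSet c)) = n.choose r := by
    rw [card_image_of_injOn hinj, card_powersetCard, card_range]
  refine ⟨_, hcard, hℱ, ?_, fun K _ W _ _ _ hrank w hw => ?_⟩
  · simp only [mem_image]
    rintro _ ⟨S, hS, rfl⟩
    rw [card_letterSet_inter hc (hsub hS).1 hcJ₁, card_filter_countBelow_odd, (hsub hS).2]
  let e : powersetCard r (range n) ≃ (powersetCard r (range n)).image (letterSet c) :=
    (Equiv.Set.imageOfInjOn _ _ hinj).trans (Equiv.subtypeEquivRight fun _ => by simp)
  have hli : LinearIndependent K fun I : (powersetCard r (range n)).image (letterSet c) =>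
      ExteriorAlgebra.ιMulti K r fun t => w (I.1.orderIsoOfFin (hcard I.1 I.2) t) :=
    (linearIndependent_equiv' e (funext fun S => rfl)).1
      (linearIndependent_ιMulti_family_letterSet hc w fun T hT => (hw T hT).1)
  refine ⟨hli, span_eq_exteriorPower_of_linearIndependent
    (fun I => ExteriorAlgebra.ιMulti_range K r (Set.mem_range_self _)) hli ?_⟩
  rw [Fintype.card_coe, hℱ, hrank]

/-- Let `n ≥ 1`, `a, b ≥ n`, `1 ≤ r ≤ n`, and let `J` be a totally ordered finite set with a
partition `J = J₁ ⊔ J₂`, `|J₁| = a`, `|J₂| = b`.  Then there is a family `ℱ` of `r`-element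
subsets of `J` with `|ℱ| = C(n, r)` such that:
(1) every `I ∈ ℱ` satisfies `|I ∩ J₁| = ⌊r/2⌋`;
(2) for every field `K`, every `n`-dimensional `K`-vector space `W`, and every family
`(w_i)_{i∈J}` in `W` such that every `n`-element subfamily is a basis of `W`, the family
`(w_I)_{I∈ℱ}` is a basis of `⋀^r W`, where `w_I = w_{i₁} ∧ ⋯ ∧ w_{i_r}` for
`I = {i₁ < ⋯ < i_r}`.  (Here being a basis of `⋀^r W` is expressed as: the family is
linearly independent and spans the submodule `⋀[K]^r W` of the exterior algebra.) -/
theorem stmt_18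
    (a b n r : ℕ) (hn : 1 ≤ n) (ha : n ≤ a) (hb : n ≤ b) (hr1 : 1 ≤ r) (hrn : r ≤ n)
    (J : Type u) [Fintype J] [LinearOrder J]
    (J₁ : Finset J) (hJ₁ : J₁.card = a) (hJ₂ : J₁ᶜ.card = b) :
    ∃ ℱ : Finset (Finset J), ∃ hcard : ∀ I ∈ ℱ, I.card = r,
      ℱ.card = n.choose r ∧
      (∀ I ∈ ℱ, (I ∩ J₁).card = r / 2) ∧
      (∀ (K : Type v) [Field K] (W : Type v) [AddCommGroup W], ∀ [Module K W],
        FiniteDimensional K W → Module.finrank K W = n →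
        ∀ w : J → W,
        (∀ T : Finset J, T.card = n →
          (LinearIndependent K fun t : T => w t) ∧
            Submodule.span K (w '' ↑T) = ⊤) →
        (LinearIndependent K fun I : ℱ =>
          ExteriorAlgebra.ιMulti K r
            (fun t : Fin r => w ((I.1.orderIsoOfFin (hcard I.1 I.2) t : J)))) ∧
        Submodule.span K (Set.range fun I : ℱ =>
            ExteriorAlgebra.ιMulti K r
              (fun t : Fin r => w ((I.1.orderIsoOfFin (hcard I.1 I.2) t : J)))) =
          ⋀[K]^r W) :=
  stmt_18_general a b n r hn ha hb J J₁ hJ₁ hJ₂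
end
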